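/- arXiv:2208.09313 — 6 statements merged into one kernel-verified Lean document; each statement's English description precedes it below -/
import Mathlib

section
/- With the setup below, for each path P_i of L we have |(R ∩ F) ∩ V(P_i)| ≤ 1, i.e. each of the k paths of L contains at most one vertex that belongs to both R and F. -/
/-- A digraph (given by its arc relation `A`) is *semicomplete* if for every pair of
distinct vertices there is at least one arc between them. -/
def Semicomplete {V : Type*} (A : V → V → Prop) : Prop :=
  ∀ x y : V, x ≠ y → A x y ∨ A y x

/-- `p` is a directed path from `s` to `t` in the digraph with arc relation `A`,
encoded as a nonempty list of distinct vertices in which consecutive vertices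
are joined by arcs. -/
def IsDipath {V : Type*} (A : V → V → Prop) (p : List V) (s t : V) : Prop :=
  p ≠ [] ∧ p.Nodup ∧ p.Chain' A ∧ p.head? = some s ∧ p.getLast? = some t

/-- An `S`-`T` path system: `k` directed paths `P i`, where `P i` goes from `s`
to `t i`, and any two distinct paths meet exactly in `s`. -/
def IsSTSystem {V : Type*} (A : V → V → Prop) {k : ℕ} (s : V) (t : Fin k → V)
    (P : Fin k → List V) : Prop :=
  (∀ i, IsDipath A (P i) s (t i)) ∧
  ∀ i j, i ≠ j → ∀ v, v ∈ P i → v ∈ P j → v = s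

/-- The set of vertices covered by a path system. -/
def coverSet {V : Type*} {k : ℕ} (P : Fin k → List V) : Set V := {v | ∃ i, v ∈ P i}



namespace STAux

variable {V : Type*}

/-- `a` and `b` are consecutive in `p`. -/
def LAdj (p : List V) (a b : V) : Prop := ∃ l₁ l₂, p = l₁ ++ a :: b :: l₂

/-- `x` occurs strictly before `y` in `p`. -/
def LBef (p : List V) (x y : V) : Prop := ∃ l₁ l₂ l₃, p = l₁ ++ x :: l₂ ++ y :: l₃

theorem LAdj.mem_left {p : List V} {a b : V} (h : LAdj p a b) : a ∈ p := by
  obtain ⟨l₁, l₂, rfl⟩ := h; simp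

theorem LAdj.mem_right {p : List V} {a b : V} (h : LAdj p a b) : b ∈ p := by
  obtain ⟨l₁, l₂, rfl⟩ := h; simp

theorem LBef.mem_left {p : List V} {a b : V} (h : LBef p a b) : a ∈ p := by
  obtain ⟨l₁, l₂, l₃, rfl⟩ := h; simp

theorem LBef.mem_right {p : List V} {a b : V} (h : LBef p a b) : b ∈ p := by
  obtain ⟨l₁, l₂, l₃, rfl⟩ := h; simp

theorem rel_of_ladj {A : V → V → Prop} {p : List V} {a b : V}
    (hc : p.Chain' A) (h : LAdj p a b) : A a b := by
  obtain ⟨l₁, l₂, rfl⟩ := h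
  have := (List.isChain_append.mp hc).2.1
  exact (List.isChain_cons_cons.mp this).1

theorem mem_split {p : List V} {x : V} (h : x ∈ p) : ∃ l₁ l₂, p = l₁ ++ x :: l₂ :=
  List.append_of_mem h

theorem lbef_total {p : List V} {x y : V} (hx : x ∈ p) (hy : y ∈ p) (hne : x ≠ y) :
    LBef p x y ∨ LBef p y x := by
  obtain ⟨l₁, l₂, rfl⟩ := mem_split hx
  rcases List.mem_append.mp hy with hy1 | hy2
  · right
    obtain ⟨m₁, m₂, rfl⟩ := mem_split hy1
    exact ⟨m₁, m₂, l₂, by simp⟩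
  · left
    rcases List.mem_cons.mp hy2 with h | h
    · exact absurd h.symm hne
    · obtain ⟨m₁, m₂, rfl⟩ := mem_split h
      exact ⟨l₁, m₁, m₂, by simp⟩

/-- the predecessor of `y`: it is `x` itself or strictly after `x`. -/
theorem lbef_pred {p : List V} {x y : V} (h : LBef p x y) :
    ∃ a, LAdj p a y ∧ (a = x ∨ LBef p x a) := by
  obtain ⟨l₁, l₂, l₃, rfl⟩ := h
  rcases List.eq_nil_or_concat l₂ with rfl | ⟨m, a, rfl⟩
  · exact ⟨x, ⟨l₁, l₃, by simp⟩, Or.inl rfl⟩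
  · refine ⟨a, ⟨l₁ ++ x :: m, l₃, by simp⟩, Or.inr ⟨l₁, m, y :: l₃, by simp⟩⟩

/-- the successor of `x`: it is `y` itself or strictly before `y`. -/
theorem lbef_succ {p : List V} {x y : V} (h : LBef p x y) :
    ∃ b, LAdj p x b ∧ (b = y ∨ LBef p b y) := by
  obtain ⟨l₁, l₂, l₃, rfl⟩ := h
  rcases l₂ with _ | ⟨b, m⟩
  · exact ⟨y, ⟨l₁, l₃, by simp⟩, Or.inl rfl⟩
  · refine ⟨b, ⟨l₁, m ++ y :: l₃, by simp⟩, Or.inr ⟨l₁ ++ [x], m, l₃, by simp⟩⟩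

private theorem lprop_aux {p : List V} {P : V → Prop}
    (step : ∀ a b, LAdj p a b → P a → P b) {y : V} :
    ∀ (l₂ l₁ : List V) (x : V) (l₃ : List V), p = l₁ ++ x :: l₂ ++ y :: l₃ → P x → P y := by
  intro l₂
  induction l₂ with
  | nil =>
      intro l₁ x l₃ hp hx
      exact step x y ⟨l₁, l₃, by simpa using hp⟩ hx
  | cons c m ih =>
      intro l₁ x l₃ hp hx
      have hpc : P c := step x c ⟨l₁, m ++ y :: l₃, by simpa using hp⟩ hx
      exact ih (l₁ ++ [x]) c l₃ (by simpa using hp) hpc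

/-- forward propagation along a list -/
theorem lprop {p : List V} {P : V → Prop}
    (step : ∀ a b, LAdj p a b → P a → P b) {x y : V} (h : LBef p x y) (hx : P x) : P y := by
  obtain ⟨l₁, l₂, l₃, hp⟩ := h
  exact lprop_aux step l₂ l₁ x l₃ hp hx

private theorem lprop_rev_aux {p : List V} {P : V → Prop}
    (step : ∀ a b, LAdj p a b → P b → P a) {y : V} :
    ∀ (l₂ l₁ : List V) (x : V) (l₃ : List V), p = l₁ ++ x :: l₂ ++ y :: l₃ → P y → P x := by
  intro l₂
  induction l₂ with
  | nil =>
      intro l₁ x l₃ hp hy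
      exact step x y ⟨l₁, l₃, by simpa using hp⟩ hy
  | cons c m ih =>
      intro l₁ x l₃ hp hy
      have hpc : P c := ih (l₁ ++ [x]) c l₃ (by simpa using hp) hy
      exact step x c ⟨l₁, m ++ y :: l₃, by simpa using hp⟩ hpc

/-- backward propagation along a list -/
theorem lprop_rev {p : List V} {P : V → Prop}
    (step : ∀ a b, LAdj p a b → P b → P a) {x y : V} (h : LBef p x y) (hy : P y) : P x := by
  obtain ⟨l₁, l₂, l₃, hp⟩ := h
  exact lprop_rev_aux step l₂ l₁ x l₃ hp hy

/-- the head is before every other member -/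
theorem head_lbef {p : List V} {s a : V} (hh : p.head? = some s) (ha : a ∈ p) (hne : a ≠ s) :
    LBef p s a := by
  rcases p with _ | ⟨h, tl⟩
  · simp at ha
  · simp only [List.head?_cons, Option.some.injEq] at hh
    subst hh
    rcases List.mem_cons.mp ha with h | h
    · exact absurd h hne
    · obtain ⟨m₁, m₂, rfl⟩ := mem_split h
      exact ⟨[], m₁, m₂, by simp⟩

/-- every member has a successor or is the last element -/
theorem succ_or_last {p : List V} {a : V} (ha : a ∈ p) :
    (∃ b, LAdj p a b) ∨ p.getLast? = some a := by
  induction p with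
  | nil => simp at ha
  | cons h tl ih =>
      rcases tl with _ | ⟨c, tl'⟩
      · right; simp_all
      · rcases List.mem_cons.mp ha with rfl | ha'
        · exact Or.inl ⟨c, ⟨[], tl', rfl⟩⟩
        · rcases ih ha' with ⟨b, l₁, l₂, he⟩ | hl
          · exact Or.inl ⟨b, h :: l₁, l₂, by rw [he]; rfl⟩
          · right; rwa [List.getLast?_cons_cons]

/-- in a nodup list, decompositions around the same element agree -/
theorem nodup_split_unique {x : V} : ∀ {l₁ m₁ l₂ m₂ : List V},
    (l₁ ++ x :: l₂).Nodup → l₁ ++ x :: l₂ = m₁ ++ x :: m₂ → l₁ = m₁ ∧ l₂ = m₂ := by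
  intro l₁
  induction l₁ with
  | nil =>
      intro m₁ l₂ m₂ hnd he
      rcases m₁ with _ | ⟨a, m₁'⟩
      · simpa using he
      · simp only [List.nil_append, List.cons_append, List.cons.injEq] at he
        obtain ⟨hxa, he2⟩ := he
        exfalso
        have hmem : x ∈ m₁' ++ x :: m₂ := by simp
        rw [← he2] at hmem
        exact (List.nodup_cons.mp hnd).1 hmem
  | cons a l₁' ih =>
      intro m₁ l₂ m₂ hnd he
      rcases m₁ with _ | ⟨b, m₁'⟩
      · simp only [List.cons_append, List.nil_append, List.cons.injEq] at he
        obtain ⟨hax, he2⟩ := he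
        exfalso
        have hmem : a ∈ l₁' ++ x :: l₂ := by rw [hax]; simp
        exact (List.nodup_cons.mp hnd).1 hmem
      · simp only [List.cons_append, List.cons.injEq] at he
        obtain ⟨rfl, he2⟩ := he
        have := ih (l₂ := l₂) (m₁ := m₁') (m₂ := m₂) (List.nodup_cons.mp hnd).2 he2
        exact ⟨by rw [this.1], this.2⟩

theorem succ_unique {p : List V} {a b b' : V} (hnd : p.Nodup)
    (h1 : LAdj p a b) (h2 : LAdj p a b') : b = b' := by
  obtain ⟨l₁, l₂, rfl⟩ := h1
  obtain ⟨m₁, m₂, he⟩ := h2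
  have h := nodup_split_unique (x := a) (l₂ := b :: l₂) (m₂ := b' :: m₂) hnd he
  have := h.2
  exact (List.cons.injEq .. ▸ this).1

end STAux
namespace STAux
variable {V : Type*}

theorem exists_nodup_chain {A : V → V → Prop} {W : Set V} {a b : V} (ha : a ∈ W)
    (h : Relation.ReflTransGen (fun u v => u ∈ W ∧ v ∈ W ∧ A u v) a b) :
    ∃ c : List V, c ≠ [] ∧ c.Chain' A ∧ c.head? = some a ∧ c.getLast? = some b ∧
      c.Nodup ∧ ∀ x ∈ c, x ∈ W := by
  induction h with
  | refl => exact ⟨[a], by simp, List.isChain_singleton a, by simp, by simp, by simp, by simpa⟩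
  | @tail m b ham hmb ih =>
      obtain ⟨c, hne, hch, hhd, hlst, hnd, hW⟩ := ih
      by_cases hb : b ∈ c
      · obtain ⟨d₁, d₂, rfl⟩ := mem_split hb
        have hpre : (d₁ ++ [b]).IsPrefix (d₁ ++ b :: d₂) := ⟨d₂, by simp⟩
        refine ⟨d₁ ++ [b], by simp, hch.prefix hpre, ?_,
          by simp [List.getLast?_concat], hnd.sublist hpre.sublist, ?_⟩
        · rcases d₁ with _ | ⟨e, d₁'⟩ <;> simpa using hhd
        · intro x hx
          exact hW x (hpre.sublist.subset hx)
      · refine ⟨c ++ [b], by simp, ?_, ?_, by simp [List.getLast?_concat], ?_, ?_⟩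
        · show List.IsChain A _
          rw [List.isChain_append]
          refine ⟨hch, by simp, ?_⟩
          intro x hx y hy
          simp only [List.head?_cons, Option.mem_def, Option.some.injEq] at hy
          rw [hlst] at hx
          simp only [Option.mem_def, Option.some.injEq] at hx
          subst hx; subst hy
          exact hmb.2.2
        · rcases c with _ | ⟨e, tc⟩
          · simp at hne
          · simpa using hhd
        · rw [List.nodup_append]
          exact ⟨hnd, by simp, by intro a' ha' b' hb'; simp at hb'; subst hb'; exact fun h => hb (h ▸ ha')⟩
        · intro x hx
          rcases List.mem_append.mp hx with h | h
          · exact hW x h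
          · simp at h; subst h; exact hmb.2.1

end STAux
namespace STAux
variable {V : Type*}

/-- reachability inside a vertex set `W` -/
def WReach (A : V → V → Prop) (W : Set V) : V → V → Prop :=
  Relation.ReflTransGen (fun u v => u ∈ W ∧ v ∈ W ∧ A u v)

theorem wreach_refl {A : V → V → Prop} {W : Set V} {a : V} : WReach A W a a :=
  Relation.ReflTransGen.refl

theorem wreach_single {A : V → V → Prop} {W : Set V} {a b : V}
    (ha : a ∈ W) (hb : b ∈ W) (hA : A a b) : WReach A W a b :=
  Relation.ReflTransGen.single ⟨ha, hb, hA⟩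

theorem wreach_tail {A : V → V → Prop} {W : Set V} {a b c : V}
    (h : WReach A W a b) (hb : b ∈ W) (hc : c ∈ W) (hA : A b c) : WReach A W a c :=
  Relation.ReflTransGen.tail h ⟨hb, hc, hA⟩

theorem wreach_head {A : V → V → Prop} {W : Set V} {a b c : V}
    (ha : a ∈ W) (hb : b ∈ W) (hA : A a b) (h : WReach A W b c) : WReach A W a c :=
  Relation.ReflTransGen.head ⟨ha, hb, hA⟩ h

theorem wreach_trans {A : V → V → Prop} {W : Set V} {a b c : V}
    (h1 : WReach A W a b) (h2 : WReach A W b c) : WReach A W a c :=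
  Relation.ReflTransGen.trans h1 h2

theorem exists_nodup_chain' {A : V → V → Prop} {W : Set V} {a b : V} (ha : a ∈ W)
    (h : WReach A W a b) :
    ∃ c : List V, c ≠ [] ∧ c.Chain' A ∧ c.head? = some a ∧ c.getLast? = some b ∧
      c.Nodup ∧ ∀ x ∈ c, x ∈ W :=
  exists_nodup_chain ha h

end STAux
namespace STAux
variable {V : Type*}

theorem no_insertion [Fintype V] {A : V → V → Prop} {k : ℕ} {s : V} {t : Fin k → V}
    {L : Fin k → List V} (hL : IsSTSystem A s t L)
    (hmax : ∀ P : Fin k → List V, IsSTSystem A s t P →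
      (coverSet P).ncard ≤ (coverSet L).ncard)
    {i : Fin k} {a b : V} (hadj : LAdj (L i) a b)
    {c : List V} (hcne : c ≠ []) (hcch : c.Chain' A) (hcnd : c.Nodup)
    (hcW : ∀ x ∈ c, x ∉ coverSet L)
    (hhead : ∀ w ∈ c.head?, A a w) (hlast : ∀ w ∈ c.getLast?, A w b) : False := by
  classical
  obtain ⟨l₁, l₂, hLi⟩ := hadj
  set newp := l₁ ++ a :: (c ++ b :: l₂) with hnewp
  have hperm : newp.Perm (L i ++ c) := by
    rw [hLi, hnewp]
    have h1 : (c ++ (b :: l₂)).Perm ((b :: l₂) ++ c) := List.perm_append_comm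
    have h2 := (h1.cons a).append_left l₁
    simpa using h2
  have hmem : ∀ v, v ∈ newp ↔ v ∈ L i ∨ v ∈ c := by
    intro v; rw [hperm.mem_iff, List.mem_append]
  obtain ⟨hne0, hnd0, hch0, hhd0, hlst0⟩ := hL.1 i
  have hch0' : (l₁ ++ a :: b :: l₂).Chain' A := hLi ▸ hch0
  change List.IsChain A _ at hch0'
  rw [List.isChain_append] at hch0'
  obtain ⟨hchl₁, hch2, hlink⟩ := hch0'
  rw [List.isChain_cons_cons] at hch2
  have hchnew : newp.Chain' A := by
    show List.IsChain A _
    rw [hnewp, List.isChain_append]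
    refine ⟨hchl₁, ?_, ?_⟩
    · rw [List.isChain_cons]
      constructor
      · intro y hy
        rw [List.head?_append_of_ne_nil c hcne] at hy
        exact hhead y hy
      · rw [List.isChain_append]
        refine ⟨hcch, hch2.2, ?_⟩
        intro x hx y hy
        simp only [List.head?_cons, Option.mem_def, Option.some.injEq] at hy
        subst hy; exact hlast x hx
    · intro x hx y hy
      simp only [List.head?_cons, Option.mem_def, Option.some.injEq] at hy
      subst hy
      exact hlink x hx a (by simp)
  have hhdnew : newp.head? = some s := by
    rw [← hhd0, hLi, hnewp]
    rcases l₁ with _ | ⟨e, l₁'⟩ <;> simp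
  have hlstnew : newp.getLast? = some (t i) := by
    rw [← hlst0, hLi, hnewp]
    have h1 : l₁ ++ a :: (c ++ b :: l₂) = (l₁ ++ a :: c) ++ (b :: l₂) := by simp
    have h2 : l₁ ++ a :: b :: l₂ = (l₁ ++ [a]) ++ (b :: l₂) := by simp
    rw [h1, h2, List.getLast?_append_of_ne_nil _ (List.cons_ne_nil b l₂),
      List.getLast?_append_of_ne_nil _ (List.cons_ne_nil b l₂)]
  have hndnew : newp.Nodup :=
    hperm.nodup_iff.mpr (List.Nodup.append hnd0 hcnd (fun v hv hvc => hcW v hvc ⟨i, hv⟩))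
  have hL' : IsSTSystem A s t (Function.update L i newp) := by
    constructor
    · intro j
      by_cases hj : j = i
      · subst hj
        rw [Function.update_self]
        exact ⟨by simp [hnewp], hndnew, hchnew, hhdnew, hlstnew⟩
      · rw [Function.update_of_ne hj]; exact hL.1 j
    · intro i' j' hne' v hv1 hv2
      by_cases hi' : i' = i
      · subst hi'
        rw [Function.update_self] at hv1
        rw [Function.update_of_ne (Ne.symm hne')] at hv2
        rcases (hmem v).mp hv1 with h | h
        · exact hL.2 i' j' hne' v h hv2
        · exact absurd ⟨j', hv2⟩ (hcW v h)
      · rw [Function.update_of_ne hi'] at hv1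
        by_cases hj' : j' = i
        · subst hj'
          rw [Function.update_self] at hv2
          rcases (hmem v).mp hv2 with h | h
          · exact hL.2 i' j' hne' v hv1 h
          · exact absurd ⟨i', hv1⟩ (hcW v h)
        · rw [Function.update_of_ne hj'] at hv2
          exact hL.2 i' j' hne' v hv1 hv2
  have hsub : coverSet L ⊆ coverSet (Function.update L i newp) := by
    rintro v ⟨j, hv⟩
    by_cases hj : j = i
    · refine ⟨i, ?_⟩
      rw [Function.update_self]
      exact (hmem v).mpr (Or.inl (hj ▸ hv))
    · exact ⟨j, by rwa [Function.update_of_ne hj]⟩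
  obtain ⟨w0, hw0⟩ := List.exists_mem_of_ne_nil c hcne
  have hnotin : w0 ∉ coverSet L := hcW w0 hw0
  have hin : w0 ∈ coverSet (Function.update L i newp) :=
    ⟨i, by rw [Function.update_self]; exact (hmem w0).mpr (Or.inr hw0)⟩
  have hss : coverSet L ⊂ coverSet (Function.update L i newp) :=
    ⟨hsub, fun hsup => hnotin (hsup hin)⟩
  have hlt := Set.ncard_lt_ncard hss (Set.toFinite _)
  have := hmax _ hL'
  omega

end STAux

open STAux in
theorem stmt_8 {V : Type*} [Fintype V] (A : V → V → Prop)
    (hirr : Irreflexive A) (hsc : Semicomplete A)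
    (k : ℕ) (hk : 2 ≤ k)
    (hcard : (9 * k) ^ 5 ≤ Fintype.card V)
    (hdeg : ∀ v : V, (Fintype.card V + k) / 2 ≤ {w : V | A v w}.ncard ∧
      (Fintype.card V + k) / 2 ≤ {w : V | A w v}.ncard)
    (s : V) (t : Fin k → V) (htinj : Function.Injective t)
    (hst : ∀ i, t i ≠ s)
    (L : Fin k → List V) (hL : IsSTSystem A s t L)
    (hmax : ∀ P : Fin k → List V, IsSTSystem A s t P →
      (coverSet P).ncard ≤ (coverSet L).ncard)
    (hncov : coverSet L ≠ Set.univ)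
    (VH : Set V) (hVH : VH = (coverSet L)ᶜ)
    (F R : Set V)
    (hF : F = {x ∈ coverSet L | ∃ y ∈ VH, A y x})
    (hR : R = {x ∈ coverSet L | ∃ y ∈ VH, A x y}) :
    ∀ i : Fin k, (R ∩ F ∩ {v | v ∈ L i}).ncard ≤ 1 := by
  classical
  subst hVH; subst hF; subst hR
  intro i
  by_contra hcon
  have hgt : 1 < ({x ∈ coverSet L | ∃ y ∈ (coverSet L)ᶜ, A x y} ∩
      {x ∈ coverSet L | ∃ y ∈ (coverSet L)ᶜ, A y x} ∩ {v | v ∈ L i}).ncard :=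
    Nat.lt_of_not_le (fun h => hcon h)
  obtain ⟨x, hx, y, hy, hxy⟩ := (Set.one_lt_ncard (Set.toFinite _)).mp hgt
  set W : Set V := (coverSet L)ᶜ with hWdef
  set RR : Set V := {x ∈ coverSet L | ∃ y ∈ W, A x y} with hRRdef
  set FF : Set V := {x ∈ coverSet L | ∃ y ∈ W, A y x} with hFFdef
  have hRmem : ∀ v, v ∈ RR ↔ (v ∈ coverSet L ∧ ∃ w ∈ W, A v w) := by
    intro v; rw [hRRdef]; exact Iff.rfl
  have hFmem : ∀ v, v ∈ FF ↔ (v ∈ coverSet L ∧ ∃ w ∈ W, A w v) := by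
    intro v; rw [hFFdef]; exact Iff.rfl
  -- one-step propagation of RR forward and FF backward along the paths
  have hRstep : ∀ (j : Fin k) a b, LAdj (L j) a b → a ∈ RR → b ∈ RR := by
    intro j a b hadj haR
    obtain ⟨hacov, w, hw, haw⟩ := (hRmem a).mp haR
    have hbmem : b ∈ coverSet L := ⟨j, hadj.mem_right⟩
    have hwb : w ≠ b := fun he => hw (he ▸ hbmem)
    rcases hsc w b hwb with h | h
    · exact absurd (no_insertion hL hmax hadj (List.cons_ne_nil w []) (List.isChain_singleton w)
        (by simp) (by intro x' hx'; simp only [List.mem_singleton] at hx'; subst hx'; exact hw)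
        (by intro w' hw'; simp only [List.head?_cons, Option.mem_def, Option.some.injEq] at hw';
            subst hw'; exact haw)
        (by intro w' hw'; simp only [List.getLast?_singleton, Option.mem_def,
              Option.some.injEq] at hw'; subst hw'; exact h)) (fun hfalse => hfalse)
    · exact (hRmem b).mpr ⟨hbmem, w, hw, h⟩
  have hFstep : ∀ (j : Fin k) a b, LAdj (L j) a b → b ∈ FF → a ∈ FF := by
    intro j a b hadj hbF
    obtain ⟨hbcov, w, hw, hwb⟩ := (hFmem b).mp hbF
    have hacov : a ∈ coverSet L := ⟨j, hadj.mem_left⟩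
    have haw : a ≠ w := fun he => hw (he ▸ hacov)
    rcases hsc a w haw with h | h
    · exact absurd (no_insertion hL hmax hadj (List.cons_ne_nil w []) (List.isChain_singleton w)
        (by simp) (by intro x' hx'; simp only [List.mem_singleton] at hx'; subst hx'; exact hw)
        (by intro w' hw'; simp only [List.head?_cons, Option.mem_def, Option.some.injEq] at hw';
            subst hw'; exact h)
        (by intro w' hw'; simp only [List.getLast?_singleton, Option.mem_def,
              Option.some.injEq] at hw'; subst hw'; exact hwb)) (fun hfalse => hfalse)
    · exact (hFmem a).mpr ⟨hacov, w, hw, h⟩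
  -- an arc of L i from RR into FF
  have hxLi : x ∈ L i := hx.2
  have hyLi : y ∈ L i := hy.2
  have hbad : ∃ u v, LAdj (L i) u v ∧ u ∈ RR ∧ v ∈ FF := by
    rcases lbef_total hxLi hyLi hxy with hbef | hbef
    · obtain ⟨a, hadj, hao⟩ := lbef_pred hbef
      refine ⟨a, y, hadj, ?_, hy.1.2⟩
      rcases hao with rfl | hb
      · exact hx.1.1
      · exact lprop (fun a' b' h' => hRstep i a' b' h') hb hx.1.1
    · obtain ⟨a, hadj, hao⟩ := lbef_pred hbef
      refine ⟨a, x, hadj, ?_, hx.1.2⟩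
      rcases hao with rfl | hb
      · exact hy.1.1
      · exact lprop (fun a' b' h' => hRstep i a' b' h') hb hy.1.1
  obtain ⟨x₁, y₁, hadj₁, hx₁R, hy₁F⟩ := hbad
  -- no W-path from an out-neighbour of x₁ to an in-neighbour of y₁
  have hAB : ∀ wa wb, A x₁ wa → wa ∈ W → A wb y₁ → wb ∈ W → WReach A W wa wb → False := by
    intro wa wb h1 h2 h3 h4 hr
    obtain ⟨c, hcne, hcch, hchd, hclst, hcnd, hcmem⟩ := exists_nodup_chain' h2 hr
    refine no_insertion hL hmax hadj₁ hcne hcch hcnd (fun z' hz' => hcmem z' hz') ?_ ?_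
    · intro w' hw'
      rw [hchd] at hw'
      simp only [Option.mem_def, Option.some.injEq] at hw'
      subst hw'; exact h1
    · intro w' hw'
      rw [hclst] at hw'
      simp only [Option.mem_def, Option.some.injEq] at hw'
      subst hw'; exact h3
  have hWne : W.Nonempty := by
    obtain ⟨-, w, hw, -⟩ := (hRmem x₁).mp hx₁R
    exact ⟨w, hw⟩
  -- sinks and sources of the reachability order on W
  set Snk : Set V := {w | w ∈ W ∧ ∀ w' ∈ W, WReach A W w' w} with hSnkdef
  set Src : Set V := {w | w ∈ W ∧ ∀ w' ∈ W, WReach A W w w'} with hSrcdef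
  have hSnkne : ∃ z, z ∈ W ∧ ∀ w' ∈ W, WReach A W w' z := by
    obtain ⟨w0, hw0, hmaxw⟩ := Set.Finite.exists_maximalFor
      (fun w => ({w' ∈ W | WReach A W w' w}).ncard) W (Set.toFinite _) hWne
    refine ⟨w0, hw0, ?_⟩
    intro w₁ hw₁
    by_contra hnr
    have hne : w₁ ≠ w0 := fun h => hnr (h ▸ wreach_refl)
    rcases hsc w₁ w0 hne with h | h
    · exact hnr (wreach_single hw₁ hw0 h)
    · have hsubs : {w' ∈ W | WReach A W w' w0} ⊆ {w' ∈ W | WReach A W w' w₁} := by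
        rintro w' ⟨hw', hr⟩
        exact ⟨hw', wreach_tail hr hw0 hw₁ h⟩
      have hstrict : w₁ ∈ {w' ∈ W | WReach A W w' w₁} := ⟨hw₁, wreach_refl⟩
      have hnot : w₁ ∉ {w' ∈ W | WReach A W w' w0} := fun hc => hnr hc.2
      have hlt : ({w' ∈ W | WReach A W w' w0}).ncard < ({w' ∈ W | WReach A W w' w₁}).ncard :=
        Set.ncard_lt_ncard ⟨hsubs, fun hsup => hnot (hsup hstrict)⟩ (Set.toFinite _)
      have := hmaxw hw₁ (le_of_lt hlt); beta_reduce at this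
      omega
  have hSrcne : ∃ u, u ∈ W ∧ ∀ w' ∈ W, WReach A W u w' := by
    obtain ⟨w0, hw0, hmaxw⟩ := Set.Finite.exists_maximalFor
      (fun w => ({w' ∈ W | WReach A W w w'}).ncard) W (Set.toFinite _) hWne
    refine ⟨w0, hw0, ?_⟩
    intro w₁ hw₁
    by_contra hnr
    have hne : w0 ≠ w₁ := fun h => hnr (h ▸ wreach_refl)
    rcases hsc w0 w₁ hne with h | h
    · exact hnr (wreach_single hw0 hw₁ h)
    · have hsubs : {w' ∈ W | WReach A W w0 w'} ⊆ {w' ∈ W | WReach A W w₁ w'} := by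
        rintro w' ⟨hw', hr⟩
        exact ⟨hw', wreach_head hw₁ hw0 h hr⟩
      have hstrict : w₁ ∈ {w' ∈ W | WReach A W w₁ w'} := ⟨hw₁, wreach_refl⟩
      have hnot : w₁ ∉ {w' ∈ W | WReach A W w0 w'} := fun hc => hnr hc.2
      have hlt : ({w' ∈ W | WReach A W w0 w'}).ncard < ({w' ∈ W | WReach A W w₁ w'}).ncard :=
        Set.ncard_lt_ncard ⟨hsubs, fun hsup => hnot (hsup hstrict)⟩ (Set.toFinite _)
      have := hmaxw hw₁ (le_of_lt hlt); beta_reduce at this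
      omega
  obtain ⟨z, hzW, hzSnk⟩ := hSnkne
  obtain ⟨u, huW, huSrc⟩ := hSrcne
  have hdisj : ∀ w, w ∈ Snk → w ∈ Src → False := by
    intro w hw1 hw2
    obtain ⟨-, wa, hwa, hxa⟩ := (hRmem x₁).mp hx₁R
    obtain ⟨-, wb, hwb, hby⟩ := (hFmem y₁).mp hy₁F
    exact hAB wa wb hxa hwa hby hwb (wreach_trans (hw1.2 wa hwa) (hw2.2 wb hwb))
  -- the successor of an in-neighbour of u is not in FF
  have hUsucc : ∀ a, A a u → ∀ (j : Fin k) b, LAdj (L j) a b → b ∉ FF := by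
    intro a hau j b hadj hbF
    obtain ⟨hbcov, w₁, hw₁, hw₁b⟩ := (hFmem b).mp hbF
    have hr : WReach A W u w₁ := huSrc w₁ hw₁
    obtain ⟨c, hcne, hcch, hchd, hclst, hcnd, hcmem⟩ := exists_nodup_chain' huW hr
    refine no_insertion hL hmax hadj hcne hcch hcnd (fun z' hz' => hcmem z' hz') ?_ ?_
    · intro w' hw'
      rw [hchd] at hw'
      simp only [Option.mem_def, Option.some.injEq] at hw'
      subst hw'; exact hau
    · intro w' hw'
      rw [hclst] at hw'
      simp only [Option.mem_def, Option.some.injEq] at hw'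
      subst hw'; exact hw₁b
  -- two vertices on a common path that are out-neighbours of z and in-neighbours of u coincide
  have hsame : ∀ (j : Fin k) v₁ v₂, v₁ ∈ L j → v₂ ∈ L j →
      A z v₁ → A v₁ u → A z v₂ → A v₂ u → v₁ = v₂ := by
    intro j v₁ v₂ h1 h2 hz1 hu1 hz2 hu2
    by_contra hne
    have H : ∀ w₁ w₂, w₂ ∈ L j → A w₁ u → A z w₂ → LBef (L j) w₁ w₂ → False := by
      intro w₁ w₂ hm2 hw₁u hzw₂ hbef
      obtain ⟨b, hadjb, hbo⟩ := lbef_succ hbef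
      have hw₂F : w₂ ∈ FF := (hFmem w₂).mpr ⟨⟨j, hm2⟩, z, hzW, hzw₂⟩
      have hbF : b ∈ FF := by
        rcases hbo with rfl | hb
        · exact hw₂F
        · exact lprop_rev (fun a' b' h' => hFstep j a' b' h') hb hw₂F
      exact hUsucc w₁ hw₁u j b hadjb hbF
    rcases lbef_total h1 h2 hne with hb | hb
    · exact H v₁ v₂ h2 hu1 hz2 hb
    · exact H v₂ v₁ h1 hu2 hz1 hb
  -- counting
  set Zc : Set V := {w | A z w} ∩ coverSet L with hZcdef
  set Uc : Set V := {w | A w u} ∩ coverSet L with hUcdef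
  set ZW : Set V := {w | A z w} ∩ W with hZWdef
  set UW : Set V := {w | A w u} ∩ W with hUWdef
  have hZUk : (Zc ∩ Uc).ncard ≤ k := by
    have hmem' : ∀ v ∈ Zc ∩ Uc, ∃ j : Fin k, v ∈ L j := fun v hv => hv.1.2
    have hkpos : 0 < k := by omega
    set f : V → Fin k :=
      fun v => if h : ∃ j : Fin k, v ∈ L j then h.choose else ⟨0, hkpos⟩ with hfdef
    have hfmem : ∀ v ∈ Zc ∩ Uc, v ∈ L (f v) := by
      intro v hv
      have h := hmem' v hv
      show v ∈ L (if h' : ∃ j : Fin k, v ∈ L j then h'.choose else ⟨0, hkpos⟩)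
      rw [dif_pos h]
      exact h.choose_spec
    have hinj : Set.InjOn f (Zc ∩ Uc) := by
      intro v₁ h₁ v₂ h₂ hfe
      have hm1 := hfmem v₁ h₁
      have hm2 := hfmem v₂ h₂
      rw [hfe] at hm1
      exact hsame (f v₂) v₁ v₂ hm1 hm2 h₁.1.1 h₁.2.1 h₂.1.1 h₂.2.1
    calc (Zc ∩ Uc).ncard ≤ (Set.univ : Set (Fin k)).ncard :=
          Set.ncard_le_ncard_of_injOn f (fun a _ => Set.mem_univ (f a)) hinj (Set.toFinite _)
      _ = k := by rw [Set.ncard_univ, Nat.card_eq_fintype_card, Fintype.card_fin]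
  have hZWsub : ZW ⊆ Snk \ {z} := by
    rintro v ⟨hzv, hvW⟩
    refine ⟨⟨hvW, fun w' hw' => wreach_tail (hzSnk w' hw') hzW hvW hzv⟩, ?_⟩
    simp only [Set.mem_singleton_iff]
    rintro rfl
    exact hirr v hzv
  have hUWsub : UW ⊆ Src \ {u} := by
    rintro v ⟨hvu, hvW⟩
    refine ⟨⟨hvW, fun w' hw' => wreach_head hvW huW hvu (huSrc w' hw')⟩, ?_⟩
    simp only [Set.mem_singleton_iff]
    rintro rfl
    exact hirr v hvu
  have hzsplit : Zc.ncard + ZW.ncard = {w | A z w}.ncard := by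
    rw [hZcdef, hZWdef, hWdef,
      ← Set.ncard_union_eq (Set.disjoint_left.mpr (fun v hv1 hv2 => hv2.2 hv1.2))
        (Set.toFinite _) (Set.toFinite _), Set.inter_union_compl]
  have husplit : Uc.ncard + UW.ncard = {w | A w u}.ncard := by
    rw [hUcdef, hUWdef, hWdef,
      ← Set.ncard_union_eq (Set.disjoint_left.mpr (fun v hv1 hv2 => hv2.2 hv1.2))
        (Set.toFinite _) (Set.toFinite _), Set.inter_union_compl]
  have hz1 : ZW.ncard + 1 ≤ Snk.ncard := by
    have he : (Snk \ {z}).ncard + 1 = Snk.ncard :=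
      Set.ncard_diff_singleton_add_one (show z ∈ Snk from ⟨hzW, hzSnk⟩) (Set.toFinite _)
    have hle : ZW.ncard ≤ (Snk \ {z}).ncard := Set.ncard_le_ncard hZWsub (Set.toFinite _)
    omega
  have hu1 : UW.ncard + 1 ≤ Src.ncard := by
    have he : (Src \ {u}).ncard + 1 = Src.ncard :=
      Set.ncard_diff_singleton_add_one (show u ∈ Src from ⟨huW, huSrc⟩) (Set.toFinite _)
    have hle : UW.ncard ≤ (Src \ {u}).ncard := Set.ncard_le_ncard hUWsub (Set.toFinite _)
    omega
  have hSnkSrc : Snk.ncard + Src.ncard ≤ W.ncard := by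
    rw [← Set.ncard_union_eq (Set.disjoint_left.mpr (fun v hv1 hv2 => hdisj v hv1 hv2))
      (Set.toFinite _) (Set.toFinite _)]
    exact Set.ncard_le_ncard (Set.union_subset (fun v hv => hv.1) (fun v hv => hv.1))
      (Set.toFinite _)
  have hZcUc : (Zc ∩ Uc).ncard + (Zc ∪ Uc).ncard = Zc.ncard + Uc.ncard :=
    Set.ncard_inter_add_ncard_union _ _ (Set.toFinite _) (Set.toFinite _)
  have hZcUcov : (Zc ∪ Uc).ncard ≤ (coverSet L).ncard :=
    Set.ncard_le_ncard (Set.union_subset (fun v hv => hv.2) (fun v hv => hv.2))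
      (Set.toFinite _)
  have hnV : (coverSet L).ncard + W.ncard = Fintype.card V := by
    rw [hWdef, Set.ncard_add_ncard_compl, Nat.card_eq_fintype_card]
  have hdz := (hdeg z).1
  have hdu := (hdeg u).2
  omega
end

section
/- With the setup below, |F_m| ≥ (n − k + 1)/2 − |H| and |R_m| ≥ (n − k + 1)/2 − |H|, where F_m := F \ R and R_m := R \ F. -/
section helpers
variable {V : Type*}
lemma decomp_unique' {v : V} : ∀ {p p' q q' : List V}, v ∉ p → v ∉ p' →
    p ++ v :: q = p' ++ v :: q' → p = p' ∧ q = q' := by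
  intro p
  induction p with
  | nil =>
    intro p' q q' _ hp' h
    cases p' with
    | nil => simpa using h
    | cons a p'' =>
      simp only [List.nil_append, List.cons_append, List.cons.injEq] at h
      exact absurd (h.1 ▸ (List.mem_cons_self (a := a) (l := p''))) (by simp [h.1] at hp')
  | cons a p ih =>
    intro p' q q' hp hp' h
    cases p' with
    | nil =>
      simp only [List.cons_append, List.nil_append, List.cons.injEq] at h
      exact absurd (h.1 ▸ (List.mem_cons_self (a := a) (l := p))) (by simp [h.1] at hp)
    | cons a' p'' =>
      simp only [List.cons_append, List.cons.injEq] at h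
      obtain ⟨h1, h2⟩ := h
      have := ih (fun hh => hp (List.mem_cons_of_mem _ hh))
        (fun hh => hp' (h1 ▸ List.mem_cons_of_mem _ hh)) h2
      exact ⟨by rw [h1, this.1], this.2⟩

lemma getLast?_some_mem {l : List V} {a : V} (h : l.getLast? = some a) : a ∈ l := by
  cases l with
  | nil => simp at h
  | cons x xs =>
    have h2 : (x :: xs).getLast? = some ((x::xs).getLast (by simp)) := List.getLast?_eq_getLast _
    rw [h] at h2
    exact (Option.some_inj.1 h2) ▸ List.getLast_mem _

lemma head?_some_mem {l : List V} {a : V} (h : l.head? = some a) : a ∈ l := by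
  cases l with
  | nil => simp at h
  | cons x xs => simp at h; exact h ▸ (List.mem_cons_self (a := x) (l := xs))

/-- if the head of `l` is `s` and `l` is nodup, any decomposition `l = xs ++ s :: rest`
has `xs = []`. -/
lemma head_decomp_nil {l xs rest : List V} {s : V} (hnd : l.Nodup)
    (hhd : l.head? = some s) (h : l = xs ++ s :: rest) : xs = [] := by
  have hne : l ≠ [] := by rw [h]; simp
  have h0 : l = [] ++ s :: l.tail := by
    cases l with
    | nil => simp at hne
    | cons x t => simp at hhd; rw [hhd]; simp
  have hs_notin : s ∉ xs := by
    rw [h] at hnd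
    rw [List.nodup_append'] at hnd
    exact fun hh => hnd.2.2 hh (List.mem_cons_self (a := s) (l := rest))
  exact (decomp_unique' (by simp) hs_notin (h0.symm.trans h)).1.symm

lemma exists_pred {l : List V} {v s : V} (hv : v ∈ l) (hnd : l.Nodup)
    (hhd : l.head? = some s) (hvs : v ≠ s) : ∃ xs u ys, l = xs ++ u :: v :: ys := by
  obtain ⟨p, q, rfl⟩ := List.append_of_mem hv
  cases p with
  | nil => simp at hhd; exact absurd hhd.symm (fun hh => hvs hh.symm)
  | cons x p' =>
    rcases List.eq_nil_or_concat (x :: p') with h | ⟨p'', u, h⟩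
    · simp at h
    · exact ⟨p'', u, q, by rw [h]; simp⟩

lemma exists_succ {l : List V} {u w : V} (hu : u ∈ l)
    (hlast : l.getLast? = some w) (huw : u ≠ w) : ∃ xs v ys, l = xs ++ u :: v :: ys := by
  obtain ⟨p, q, rfl⟩ := List.append_of_mem hu
  cases q with
  | nil =>
    rw [List.getLast?_concat] at hlast
    exact absurd (Option.some_inj.1 hlast) huw
  | cons v ys => exact ⟨p, v, ys, rfl⟩

lemma succ_unique {l : List V} (hnd : l.Nodup) {xs ys xs' ys' : List V} {u v v' : V}
    (h : l = xs ++ u :: v :: ys) (h' : l = xs' ++ u :: v' :: ys') : v = v' := by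
  have hu : u ∉ xs := by
    rw [h, List.nodup_append'] at hnd
    exact fun hh => hnd.2.2 hh (List.mem_cons_self (a := u))
  have hu' : u ∉ xs' := by
    rw [h', List.nodup_append'] at hnd
    exact fun hh => hnd.2.2 hh (List.mem_cons_self (a := u))
  have := (decomp_unique' hu hu' (h.symm.trans h')).2
  exact (List.cons.injEq _ _ _ _ ▸ this).1

lemma pred_unique {l : List V} (hnd : l.Nodup) {xs ys xs' ys' : List V} {u u' v : V}
    (h : l = xs ++ u :: v :: ys) (h' : l = xs' ++ u' :: v :: ys') : u = u' := by
  have e : l = (xs ++ [u]) ++ v :: ys := by rw [h]; simp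
  have e' : l = (xs' ++ [u']) ++ v :: ys' := by rw [h']; simp
  have hv : v ∉ xs ++ [u] := by
    rw [e, List.nodup_append'] at hnd
    exact fun hh => hnd.2.2 hh (List.mem_cons_self (a := v))
  have hv' : v ∉ xs' ++ [u'] := by
    rw [e', List.nodup_append'] at hnd
    exact fun hh => hnd.2.2 hh (List.mem_cons_self (a := v))
  have heq := (decomp_unique' hv hv' (e.symm.trans e')).1
  have := congrArg List.getLast? heq
  rw [List.getLast?_concat, List.getLast?_concat] at this
  exact Option.some_inj.1 this


end helpers

lemma chain_insert (A : V → V → Prop) :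
    ∀ (q : List V) (a : V), q.Chain' A → q.Nodup → a ∉ q →
    (∀ x ∈ q, A a x ∨ A x a) →
    ∃ q' : List V, q'.Chain' A ∧ q'.Nodup ∧ (∀ x, x ∈ q' ↔ x = a ∨ x ∈ q) ∧
      (q'.head? = q.head? ∨ q'.head? = some a) := by
  intro q
  induction q with
  | nil =>
    intro a _ _ _ _
    exact ⟨[a], List.isChain_singleton a, by simp, by simp, by simp⟩
  | cons x rest ih =>
    intro a hch hnd ha hcmp
    rcases hcmp x (List.mem_cons_self (a := x) (l := rest)) with hax | hxa
    · exact ⟨a :: x :: rest, List.isChain_cons.2 ⟨by simpa using hax, hch⟩,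
        by rw [List.nodup_cons]; exact ⟨ha, hnd⟩, by simp, Or.inr rfl⟩
    · obtain ⟨q', hch', hnd', hmem', hhd'⟩ := ih a (hch.tail)
        (List.nodup_cons.1 hnd).2 (fun hh => ha (List.mem_cons_of_mem _ hh))
        (fun y hy => hcmp y (List.mem_cons_of_mem _ hy))
      refine ⟨x :: q', List.isChain_cons.2 ⟨?_, hch'⟩, ?_, ?_, ?_⟩
      · intro y hy
        rcases hhd' with h | h
        · rw [h] at hy
          exact (List.isChain_cons.1 hch).1 y hy
        · rw [h] at hy
          simp only [Option.mem_def, Option.some.injEq] at hy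
          exact hy ▸ hxa
      · refine List.nodup_cons.2 ⟨?_, hnd'⟩
        intro hx
        rcases (hmem' x).1 hx with h | h
        · exact ha (h ▸ List.mem_cons_self (a := x) (l := rest))
        · exact (List.nodup_cons.1 hnd).1 h
      · intro y; simp [hmem' y]; tauto
      · left; cases q' with
        | nil => exact absurd ((hmem' a).2 (Or.inl rfl)) (by simp)
        | cons z zs => simp

lemma ham_path (A : V → V → Prop) :
    ∀ (l : List V), l.Nodup → (∀ x ∈ l, ∀ y ∈ l, x ≠ y → A x y ∨ A y x) →
    ∃ Q : List V, Q.Chain' A ∧ Q.Nodup ∧ (∀ x, x ∈ Q ↔ x ∈ l) := by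
  intro l
  induction l with
  | nil => exact fun _ _ => ⟨[], List.isChain_nil, by simp, by simp⟩
  | cons a l ih =>
    intro hnd hcmp
    obtain ⟨Q, hch, hndQ, hmem⟩ := ih (List.nodup_cons.1 hnd).2
      (fun x hx y hy => hcmp x (List.mem_cons_of_mem _ hx) y (List.mem_cons_of_mem _ hy))
    have haQ : a ∉ Q := fun h => (List.nodup_cons.1 hnd).1 ((hmem a).1 h)
    obtain ⟨Q', h1, h2, h3, _⟩ := chain_insert A Q a hch hndQ haQ
      (fun y hy => hcmp a (List.mem_cons_self (a := a) (l := l)) y (List.mem_cons_of_mem _ ((hmem y).1 hy))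
        (fun hh => haQ (hh ▸ hy)))
    exact ⟨Q', h1, h2, fun x => by simp [h3 x, hmem x]⟩


lemma no_insertion {V : Type*} [Fintype V] (A : V → V → Prop) {k : ℕ}
    (s : V) (t : Fin k → V) (L : Fin k → List V) (hL : IsSTSystem A s t L)
    (hmax : ∀ P : Fin k → List V, IsSTSystem A s t P →
      (coverSet P).ncard ≤ (coverSet L).ncard)
    (i : Fin k) (xs ys : List V) (u v : V)
    (hdec : L i = xs ++ u :: v :: ys)
    (seg : List V) (hne : seg ≠ []) (hndseg : seg.Nodup) (hchseg : seg.Chain' A)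
    (hout : ∀ x ∈ seg, x ∉ coverSet L)
    (h1 : ∀ hd ∈ seg.head?, A u hd) (h2 : ∀ lst ∈ seg.getLast?, A lst v) : False := by
  classical
  set newl : List V := xs ++ u :: (seg ++ v :: ys) with hnewl
  have hmemnew : ∀ x, x ∈ newl ↔ x ∈ L i ∨ x ∈ seg := by
    intro x; simp only [hnewl, hdec, List.mem_append, List.mem_cons]; tauto
  have hLisub : ∀ x ∈ L i, x ∈ coverSet L := fun x hx => ⟨i, hx⟩
  have hcov : ∀ (j : Fin k) (x : V), x ∈ L j → x ∈ coverSet L := fun j x hx => ⟨j, hx⟩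
  have hdi := hL.1 i
  have hperm : List.Perm newl (seg ++ L i) := by
    rw [List.perm_iff_count]
    intro a
    simp only [hnewl, hdec, List.count_append, List.count_cons]
    ring
  have hndnew : newl.Nodup := by
    refine hperm.nodup_iff.2 (List.nodup_append'.2 ⟨hndseg, hdi.2.1, ?_⟩)
    intro x hx hx'
    exact hout x hx (hLisub x hx')
  have hchold := hdi.2.2.1
  unfold List.Chain' at hchold
  rw [hdec, List.isChain_append] at hchold
  obtain ⟨hch1, hch2, hch3⟩ := hchold
  have hchnew : newl.Chain' A := by
    unfold List.Chain'
    rw [hnewl, List.isChain_append]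
    refine ⟨hch1, ?_, ?_⟩
    · rw [List.isChain_cons]
      constructor
      · intro y hy
        rw [List.head?_append] at hy
        cases hhd : seg.head? with
        | none => exact absurd hhd (by simp [hne])
        | some hd =>
          rw [hhd] at hy
          simp only [Option.some_or, Option.mem_def, Option.some.injEq] at hy
          exact hy ▸ h1 hd (by rw [hhd]; rfl)
      · rw [List.isChain_append]
        refine ⟨hchseg, (List.isChain_cons_cons.1 hch2).2, ?_⟩
        intro x hx y hy
        simp only [List.head?_cons, Option.mem_def, Option.some.injEq] at hy
        exact hy ▸ h2 x hx
    · intro x hx y hy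
      simp only [List.head?_cons, Option.mem_def, Option.some.injEq] at hy
      subst hy
      exact hch3 x hx u rfl
  have hheadnew : newl.head? = some s := by
    have h := hdi.2.2.2.1
    rw [hdec, List.head?_append] at h
    rw [hnewl, List.head?_append]
    simpa using h
  have hlastnew : newl.getLast? = some (t i) := by
    have h := hdi.2.2.2.2
    have e1 : L i = (xs ++ [u]) ++ (v :: ys) := by rw [hdec]; simp
    have e2 : newl = (xs ++ u :: seg) ++ (v :: ys) := by rw [hnewl]; simp
    have e1' : (L i).getLast? = ((v :: ys).getLast?).or ((xs ++ [u]).getLast?) := by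
      rw [e1]; exact List.getLast?_append (l := xs ++ [u]) (l' := v :: ys)
    have e2' : newl.getLast? = ((v :: ys).getLast?).or ((xs ++ u :: seg).getLast?) := by
      rw [e2]; exact List.getLast?_append (l := xs ++ u :: seg) (l' := v :: ys)
    rw [e1'] at h
    rw [e2']
    cases hvys : (v :: ys).getLast? with
    | none => exact absurd hvys (by simp [List.getLast?_eq_none_iff])
    | some w => rw [hvys] at h; simpa using h
  have hnenew : newl ≠ [] := by
    rw [hnewl]; intro h
    have := congrArg List.length h
    simp at this
  set L' : Fin k → List V := Function.update L i newl with hL'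
  have hL'i : L' i = newl := by rw [hL']; simp
  have hL'j : ∀ j, j ≠ i → L' j = L j := by
    intro j hj; rw [hL']; exact Function.update_of_ne hj _ _
  have hmemL' : ∀ j x, x ∈ L' j → x ∈ L j ∨ x ∈ seg := by
    intro j x hx
    by_cases hji : j = i
    · subst hji; rw [hL'i] at hx
      rcases (hmemnew x).1 hx with h | h
      · exact Or.inl h
      · exact Or.inr h
    · rw [hL'j j hji] at hx; exact Or.inl hx
  have hsys' : IsSTSystem A s t L' := by
    constructor
    · intro j
      by_cases hji : j = i
      · subst hji; rw [hL'i]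
        exact ⟨hnenew, hndnew, hchnew, hheadnew, hlastnew⟩
      · rw [hL'j j hji]; exact hL.1 j
    · intro j j' hjj' x hx hx'
      by_cases hji : j = i
      · have hj'i : j' ≠ i := fun h => hjj' (hji.trans h.symm)
        rw [hL'j j' hj'i] at hx'
        rcases hmemL' j x hx with h | h
        · exact hL.2 j j' hjj' x h hx'
        · exact absurd (hcov j' x hx') (hout x h)
      · rw [hL'j j hji] at hx
        by_cases hj'i : j' = i
        · rcases hmemL' j' x hx' with h | h
          · exact hL.2 j j' hjj' x hx h
          · exact absurd (hcov j x hx) (hout x h)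
        · rw [hL'j j' hj'i] at hx'
          exact hL.2 j j' hjj' x hx hx'
  -- coverage strictly increases
  obtain ⟨hd, segtl, hseg⟩ := List.exists_cons_of_ne_nil hne
  have hhdseg : hd ∈ seg := by rw [hseg]; exact List.mem_cons_self (a := hd) (l := segtl)
  have hcov' : ∀ (j : Fin k) (x : V), x ∈ L' j → x ∈ coverSet L' := fun j x hx => ⟨j, hx⟩
  have hsub : coverSet L ⊆ coverSet L' := by
    rintro x ⟨j, hj⟩
    by_cases hji : j = i
    · refine hcov' i x ?_
      rw [hL'i]
      exact (hmemnew x).2 (Or.inl (hji ▸ hj))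
    · refine hcov' j x ?_
      rw [hL'j j hji]
      exact hj
  have hssub : coverSet L ⊂ coverSet L' := by
    refine ⟨hsub, fun hcontra => ?_⟩
    refine hout hd hhdseg (hcontra (hcov' i hd ?_))
    rw [hL'i]
    exact (hmemnew hd).2 (Or.inr hhdseg)
  exact absurd (hmax L' hsys') (not_le.2 (Set.ncard_lt_ncard hssub (Set.toFinite _)))

theorem stmt_10 {V : Type*} [Fintype V] (A : V → V → Prop)
    (hirr : Irreflexive A) (hsc : Semicomplete A)
    (k : ℕ) (hk : 2 ≤ k)
    (hcard : (9 * k) ^ 5 ≤ Fintype.card V)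
    (hdeg : ∀ v : V, (Fintype.card V + k) / 2 ≤ {w : V | A v w}.ncard ∧
      (Fintype.card V + k) / 2 ≤ {w : V | A w v}.ncard)
    (s : V) (t : Fin k → V) (htinj : Function.Injective t)
    (hst : ∀ i, t i ≠ s)
    (L : Fin k → List V) (hL : IsSTSystem A s t L)
    (hmax : ∀ P : Fin k → List V, IsSTSystem A s t P →
      (coverSet P).ncard ≤ (coverSet L).ncard)
    (hncov : coverSet L ≠ Set.univ)
    (VH : Set V) (hVH : VH = (coverSet L)ᶜ)
    (F R : Set V)
    (hF : F = {x ∈ coverSet L | ∃ y ∈ VH, A y x})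
    (hR : R = {x ∈ coverSet L | ∃ y ∈ VH, A x y}) :
    ((Fintype.card V : ℝ) - k + 1) / 2 - VH.ncard ≤ (F \ R).ncard ∧
    ((Fintype.card V : ℝ) - k + 1) / 2 - VH.ncard ≤ (R \ F).ncard := by
  classical
  have hVHne : VH.Nonempty := by
    rw [hVH]
    obtain ⟨a, ha⟩ := (Set.ne_univ_iff_exists_notMem _).1 hncov
    exact ⟨a, ha⟩
  obtain ⟨Q, hQch, hQnd, hQmem0⟩ := ham_path A VH.toFinite.toFinset.toList
    (Finset.nodup_toList _)
    (fun x _ y _ hxy => hsc x y hxy)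
  have hQmem : ∀ x, x ∈ Q ↔ x ∈ VH := by
    intro x
    rw [hQmem0 x, Finset.mem_toList, Set.Finite.mem_toFinset]
  have hQne : Q ≠ [] := by
    obtain ⟨y, hy⟩ := hVHne
    intro h
    rw [h] at hQmem
    simpa using (hQmem y).2 hy
  set y1 := Q.head hQne with hy1def
  set yh := Q.getLast hQne with hyhdef
  have hy1 : Q.head? = some y1 := List.head?_eq_head hQne
  have hyh : Q.getLast? = some yh := List.getLast?_eq_getLast hQne
  have hy1VH : y1 ∈ VH := (hQmem y1).1 (head?_some_mem hy1)
  have hyhVH : yh ∈ VH := (hQmem yh).1 (getLast?_some_mem hyh)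
  have hVHnotL : ∀ x ∈ VH, x ∉ coverSet L := by
    intro x hx
    rw [hVH] at hx
    exact hx
  have hcovL : ∀ (j : Fin k) (x : V), x ∈ L j → x ∈ coverSet L := fun j x hx => ⟨j, hx⟩
  have hFR : ∀ x ∈ coverSet L, x ∈ F ∨ x ∈ R := by
    intro x hx
    obtain ⟨y0, hy0⟩ := hVHne
    have hxy : x ≠ y0 := fun h => hVHnotL y0 hy0 (h ▸ hx)
    rcases hsc x y0 hxy with h | h
    · right; rw [hR]; exact ⟨hx, y0, hy0, h⟩
    · left; rw [hF]; exact ⟨hx, y0, hy0, h⟩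
  have factA : ∀ (i : Fin k) (xs ys : List V) (u v : V), L i = xs ++ u :: v :: ys →
      A yh v → u ∉ R := by
    intro i xs ys u v hdec hAv hu
    rw [hR] at hu
    obtain ⟨huL, z, hzVH, huz⟩ := hu
    obtain ⟨qs, zs, hQdec⟩ := List.append_of_mem ((hQmem z).2 hzVH)
    refine no_insertion A s t L hL hmax i xs ys u v hdec (z :: zs) (by simp) ?_ ?_ ?_ ?_ ?_
    · have := hQnd; rw [hQdec, List.nodup_append] at this; exact this.2.1
    · have := hQch; unfold List.Chain' at this; rw [hQdec, List.isChain_append] at this; exact this.2.1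
    · intro x hx
      exact hVHnotL x ((hQmem x).1 (by rw [hQdec]; exact List.mem_append_right _ hx))
    · intro hd hhd
      simp only [List.head?_cons, Option.mem_def, Option.some.injEq] at hhd
      exact hhd ▸ huz
    · intro lst hlst
      have he : Q.getLast? = ((z :: zs).getLast?).or (qs.getLast?) := by
        rw [hQdec]; exact List.getLast?_append
      rw [Option.mem_def] at hlst
      rw [hlst, hyh] at he
      simp only [Option.some_or, Option.some.injEq] at he
      exact he ▸ hAv
  have factB : ∀ (i : Fin k) (xs ys : List V) (u v : V), L i = xs ++ u :: v :: ys →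
      A u y1 → v ∉ F := by
    intro i xs ys u v hdec hAu hv
    rw [hF] at hv
    obtain ⟨hvL, z, hzVH, hzv⟩ := hv
    obtain ⟨qs, zs, hQdec⟩ := List.append_of_mem ((hQmem z).2 hzVH)
    have hQdec' : Q = (qs ++ [z]) ++ zs := by rw [hQdec]; simp
    refine no_insertion A s t L hL hmax i xs ys u v hdec (qs ++ [z]) (by simp) ?_ ?_ ?_ ?_ ?_
    · have := hQnd; rw [hQdec', List.nodup_append] at this; exact this.1
    · have := hQch; unfold List.Chain' at this; rw [hQdec', List.isChain_append] at this; exact this.1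
    · intro x hx
      exact hVHnotL x ((hQmem x).1 (by rw [hQdec']; exact List.mem_append_left _ hx))
    · intro hd hhd
      have he : Q.head? = ((qs ++ [z]).head?).or (zs.head?) := by
        rw [hQdec']; exact List.head?_append
      rw [Option.mem_def] at hhd
      rw [hhd, hy1] at he
      simp only [Option.some_or, Option.some.injEq] at he
      exact he ▸ hAu
    · intro lst hlst
      rw [Option.mem_def, List.getLast?_concat] at hlst
      exact (Option.some_inj.1 hlst) ▸ hzv
  have hxpath : ∀ x : V, x ≠ s → ∀ i j : Fin k, x ∈ L i → x ∈ L j → i = j := by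
    intro x hxs i j hi hj
    by_contra hij
    exact hxs (hL.2 i j hij x hi hj)
  have hsucc_ne_s : ∀ (i : Fin k) (xs ys : List V) (u : V),
      L i = xs ++ u :: s :: ys → False := by
    intro i xs ys u hdec
    have hdip := hL.1 i
    have e : L i = (xs ++ [u]) ++ s :: ys := by rw [hdec]; simp
    have := head_decomp_nil hdip.2.1 hdip.2.2.2.1 e
    simp at this
  set n := Fintype.card V with hn
  have hrange : (Set.range t).ncard ≤ k := by
    rw [← Set.image_univ]
    calc (t '' Set.univ).ncard ≤ (Set.univ : Set (Fin k)).ncard :=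
          Set.ncard_image_le (Set.toFinite _)
      _ = k := by rw [Set.ncard_univ]; simp
  -- ================= F side =================
  set B : Set V := {w | A yh w} ∩ coverSet L with hB
  have hBbound : (n + k) / 2 + 1 ≤ B.ncard + VH.ncard := by
    have hsub : {w | A yh w} ⊆ B ∪ (VH \ {yh}) := by
      intro w hw
      by_cases hwL : w ∈ coverSet L
      · exact Or.inl ⟨hw, hwL⟩
      · refine Or.inr ⟨by rw [hVH]; exact hwL, fun he => ?_⟩
        exact hirr yh ((Set.mem_singleton_iff.1 he) ▸ hw)
    have h2 := Set.ncard_le_ncard hsub (Set.toFinite _)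
    have h3 := Set.ncard_union_le B (VH \ {yh})
    have h4 := Set.ncard_diff_singleton_add_one hyhVH (Set.toFinite _)
    have h5 := (hdeg yh).1
    omega
  set SS : Set V := {w | ∃ (i : Fin k) (xs ys : List V), L i = xs ++ s :: w :: ys} with hSS
  have hSSk : SS.ncard ≤ k := by
    have hsub : SS ⊆ (fun i : Fin k => ((L i).tail).headD s) '' Set.univ := by
      rintro w ⟨i, xs, ys, hdec⟩
      have hdip := hL.1 i
      have hxs : xs = [] := head_decomp_nil hdip.2.1 hdip.2.2.2.1 hdec
      refine ⟨i, Set.mem_univ i, ?_⟩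
      show ((L i).tail).headD s = w
      rw [hdec, hxs]
      simp
    calc SS.ncard ≤ _ := Set.ncard_le_ncard hsub (Set.toFinite _)
      _ ≤ (Set.univ : Set (Fin k)).ncard := Set.ncard_image_le (Set.toFinite _)
      _ = k := by rw [Set.ncard_univ]; simp
  have hpred_exists : ∀ w, w ∈ coverSet L → w ≠ s →
      ∃ u, ∃ (i : Fin k) (xs ys : List V), L i = xs ++ u :: w :: ys := by
    rintro w ⟨i, hwi⟩ hws
    have hdip := hL.1 i
    obtain ⟨xs, u, ys, hdec⟩ := exists_pred hwi hdip.2.1 hdip.2.2.2.1 hws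
    exact ⟨u, i, xs, ys, hdec⟩
  set predF : V → V := fun w =>
    if h : ∃ u, ∃ (i : Fin k) (xs ys : List V), L i = xs ++ u :: w :: ys then h.choose else s
    with hpredF
  have hpredF_spec : ∀ w, w ∈ coverSet L → w ≠ s →
      ∃ (i : Fin k) (xs ys : List V), L i = xs ++ (predF w) :: w :: ys := by
    intro w hw hws
    have h := hpred_exists w hw hws
    have he : predF w = h.choose := dif_pos h
    rw [he]
    exact h.choose_spec
  have hGmem : ∀ w, w ∈ B → w ≠ s → predF w ∈ F \ R ∧
      ∃ (i : Fin k) (xs ys : List V), L i = xs ++ (predF w) :: w :: ys := by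
    intro w hwB hws
    obtain ⟨i, xs, ys, hdec⟩ := hpredF_spec w hwB.2 hws
    have hu_mem : predF w ∈ coverSet L := hcovL i _ (by rw [hdec]; simp)
    have hnotR : predF w ∉ R := factA i xs ys _ w hdec hwB.1
    exact ⟨⟨(hFR _ hu_mem).resolve_right hnotR, hnotR⟩, i, xs, ys, hdec⟩
  have hpred_ne_s : ∀ w, w ∈ B → w ≠ s → w ∉ SS → predF w ≠ s := by
    intro w hwB hws hwSS he
    obtain ⟨_, i, xs, ys, hdec⟩ := hGmem w hwB hws
    exact hwSS ⟨i, xs, ys, he ▸ hdec⟩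
  have hinj : ∀ w, w ∈ B → w ≠ s → w ∉ SS → ∀ w', w' ∈ B → w' ≠ s → w' ∉ SS →
      predF w = predF w' → w = w' := by
    intro w hwB hws hwSS w' hw'B hw's hw'SS he
    obtain ⟨_, i, xs, ys, hdec⟩ := hGmem w hwB hws
    obtain ⟨_, i', xs', ys', hdec'⟩ := hGmem w' hw'B hw's
    have hne := hpred_ne_s w hwB hws hwSS
    have hii : i = i' := hxpath (predF w) hne i i'
      (by rw [hdec]; simp) (by rw [he, hdec']; simp)
    subst hii
    rw [← he] at hdec'
    exact succ_unique (hL.1 i).2.1 hdec hdec'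
  have hFcount : B.ncard ≤ (F \ R).ncard + k := by
    by_cases hcase : (B ∩ SS).Nonempty
    · obtain ⟨w0, hw0B, hw0SS⟩ := hcase
      obtain ⟨j, as, bs, hdec0⟩ := hw0SS
      have hnotR : s ∉ R := factA j as bs s w0 hdec0 hw0B.1
      have hsmem : s ∈ coverSet L := hcovL j s (by rw [hdec0]; simp)
      have hsF : s ∈ F \ R := ⟨(hFR s hsmem).resolve_right hnotR, hnotR⟩
      have hC : (B \ ({s} ∪ SS)).ncard ≤ ((F \ R) \ {s}).ncard := by
        refine Set.ncard_le_ncard_of_injOn predF ?_ ?_ (Set.toFinite _)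
        · rintro w ⟨hwB, hwn⟩
          simp only [Set.mem_union, Set.mem_singleton_iff] at hwn
          push_neg at hwn
          exact ⟨(hGmem w hwB hwn.1).1, hpred_ne_s w hwB hwn.1 hwn.2⟩
        · rintro w ⟨hwB, hwn⟩ w' ⟨hw'B, hw'n⟩ he
          simp only [Set.mem_union, Set.mem_singleton_iff] at hwn hw'n
          push_neg at hwn hw'n
          exact hinj w hwB hwn.1 hwn.2 w' hw'B hw'n.1 hw'n.2 he
      have hBsub : B ⊆ (B \ ({s} ∪ SS)) ∪ ({s} ∪ SS) := by
        intro w hw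
        by_cases h : w ∈ ({s} ∪ SS : Set V)
        · exact Or.inr h
        · exact Or.inl ⟨hw, h⟩
      have h1 := Set.ncard_le_ncard hBsub (Set.toFinite _)
      have h2 := Set.ncard_union_le (B \ ({s} ∪ SS)) ({s} ∪ SS)
      have h3 := Set.ncard_union_le ({s} : Set V) SS
      have h4 : ({s} : Set V).ncard = 1 := Set.ncard_singleton s
      have h5 := Set.ncard_diff_singleton_add_one hsF (Set.toFinite _)
      omega
    · have hempty : B ∩ SS = ∅ := Set.not_nonempty_iff_eq_empty.1 hcase
      have hnSS : ∀ w, w ∈ B → w ∉ SS := by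
        intro w hw h
        exact Set.eq_empty_iff_forall_notMem.1 hempty w ⟨hw, h⟩
      have hC : (B \ {s}).ncard ≤ (F \ R).ncard := by
        refine Set.ncard_le_ncard_of_injOn predF ?_ ?_ (Set.toFinite _)
        · rintro w ⟨hwB, hwn⟩
          exact (hGmem w hwB (by simpa using hwn)).1
        · rintro w ⟨hwB, hwn⟩ w' ⟨hw'B, hw'n⟩ he
          exact hinj w hwB (by simpa using hwn) (hnSS w hwB)
            w' hw'B (by simpa using hw'n) (hnSS w' hw'B) he
      have hBsub : B ⊆ (B \ {s}) ∪ {s} := by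
        intro w hw
        by_cases h : w ∈ ({s} : Set V)
        · exact Or.inr h
        · exact Or.inl ⟨hw, h⟩
      have h1 := Set.ncard_le_ncard hBsub (Set.toFinite _)
      have h2 := Set.ncard_union_le (B \ {s}) ({s} : Set V)
      have h4 : ({s} : Set V).ncard = 1 := Set.ncard_singleton s
      omega
  -- ================= R side =================
  set Bin : Set V := {w | A w y1} ∩ coverSet L with hBin
  have hBinbound : (n + k) / 2 + 1 ≤ Bin.ncard + VH.ncard := by
    have hsub : {w | A w y1} ⊆ Bin ∪ (VH \ {y1}) := by
      intro w hw
      by_cases hwL : w ∈ coverSet L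
      · exact Or.inl ⟨hw, hwL⟩
      · refine Or.inr ⟨by rw [hVH]; exact hwL, fun he => ?_⟩
        exact hirr y1 ((Set.mem_singleton_iff.1 he) ▸ hw)
    have h2 := Set.ncard_le_ncard hsub (Set.toFinite _)
    have h3 := Set.ncard_union_le Bin (VH \ {y1})
    have h4 := Set.ncard_diff_singleton_add_one hy1VH (Set.toFinite _)
    have h5 := (hdeg y1).2
    omega
  set succF : V → V := fun u =>
    if h : ∃ v, ∃ (i : Fin k) (xs ys : List V), L i = xs ++ u :: v :: ys then h.choose else s
    with hsuccF
  have hsucc_exists : ∀ u, u ∈ coverSet L → u ∉ Set.range t →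
      ∃ v, ∃ (i : Fin k) (xs ys : List V), L i = xs ++ u :: v :: ys := by
    rintro u ⟨i, hui⟩ hut
    have hdip := hL.1 i
    obtain ⟨xs, v, ys, hdec⟩ := exists_succ hui hdip.2.2.2.2 (fun h => hut ⟨i, h.symm⟩)
    exact ⟨v, i, xs, ys, hdec⟩
  have hsuccF_spec : ∀ u, u ∈ coverSet L → u ∉ Set.range t →
      ∃ (i : Fin k) (xs ys : List V), L i = xs ++ u :: (succF u) :: ys := by
    intro u hu hut
    have h := hsucc_exists u hu hut
    have he : succF u = h.choose := dif_pos h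
    rw [he]
    exact h.choose_spec
  have hGmem' : ∀ u, u ∈ Bin → u ∉ Set.range t → succF u ∈ R \ F ∧
      ∃ (i : Fin k) (xs ys : List V), L i = xs ++ u :: (succF u) :: ys := by
    intro u huB hut
    obtain ⟨i, xs, ys, hdec⟩ := hsuccF_spec u huB.2 hut
    have hv_mem : succF u ∈ coverSet L := hcovL i _ (by rw [hdec]; simp)
    have hnotF : succF u ∉ F := factB i xs ys u _ hdec huB.1
    exact ⟨⟨(hFR _ hv_mem).resolve_left hnotF, hnotF⟩, i, xs, ys, hdec⟩
  have hRcount : Bin.ncard ≤ (R \ F).ncard + k := by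
    have hC : (Bin \ Set.range t).ncard ≤ (R \ F).ncard := by
      refine Set.ncard_le_ncard_of_injOn succF ?_ ?_ (Set.toFinite _)
      · rintro u ⟨huB, hun⟩
        exact (hGmem' u huB hun).1
      · rintro u ⟨huB, hun⟩ u' ⟨hu'B, hu'n⟩ he
        obtain ⟨_, i, xs, ys, hdec⟩ := hGmem' u huB hun
        obtain ⟨_, i', xs', ys', hdec'⟩ := hGmem' u' hu'B hu'n
        have hvs : succF u ≠ s := by
          intro hh
          exact hsucc_ne_s i xs ys u (hh ▸ hdec)
        have hii : i = i' := hxpath (succF u) hvs i i'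
          (by rw [hdec]; simp) (by rw [he, hdec']; simp)
        subst hii
        rw [← he] at hdec'
        exact pred_unique (hL.1 i).2.1 hdec hdec'
    have hBsub : Bin ⊆ (Bin \ Set.range t) ∪ Set.range t := by
      intro w hw
      by_cases h : w ∈ Set.range t
      · exact Or.inr h
      · exact Or.inl ⟨hw, h⟩
    have h1 := Set.ncard_le_ncard hBsub (Set.toFinite _)
    have h2 := Set.ncard_union_le (Bin \ Set.range t) (Set.range t)
    omega
  -- ================= conclusion =================
  have hfinalF : n + 1 ≤ 2 * (F \ R).ncard + 2 * VH.ncard + k := by omega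
  have hfinalR : n + 1 ≤ 2 * (R \ F).ncard + 2 * VH.ncard + k := by omega
  constructor
  · have h' : (n : ℝ) + 1 ≤ 2 * (F \ R).ncard + 2 * VH.ncard + k := by exact_mod_cast hfinalF
    linarith
  · have h' : (n : ℝ) + 1 ≤ 2 * (R \ F).ncard + 2 * VH.ncard + k := by exact_mod_cast hfinalR
    linarith
end

section
/- With the setup below, |F_m ∪ R_m| ≥ |V(L)| − k, where F_m := F \ R and R_m := R \ F. -/
lemma before_total {V : Type*} {x y : V} {l : List V} (hx : x ∈ l) (hy : y ∈ l)
    (hxy : x ≠ y) :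
    (∃ l₁ l₂, l = l₁ ++ x :: l₂ ∧ y ∈ l₂) ∨ (∃ l₁ l₂, l = l₁ ++ y :: l₂ ∧ x ∈ l₂) := by
  induction l with
  | nil => simp at hx
  | cons a l ih =>
    rcases eq_or_ne x a with rfl | hxa
    · left
      exact ⟨[], l, rfl, (List.mem_cons.mp hy).resolve_left (fun h => hxy h.symm)⟩
    · rcases eq_or_ne y a with rfl | hya
      · right
        exact ⟨[], l, rfl, (List.mem_cons.mp hx).resolve_left hxa⟩
      · have hx' := (List.mem_cons.mp hx).resolve_left hxa
        have hy' := (List.mem_cons.mp hy).resolve_left hya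
        rcases ih hx' hy' with ⟨l₁, l₂, hdec, hmem⟩ | ⟨l₁, l₂, hdec, hmem⟩
        · left; exact ⟨a :: l₁, l₂, by rw [hdec]; rfl, hmem⟩
        · right; exact ⟨a :: l₁, l₂, by rw [hdec]; rfl, hmem⟩

lemma exists_path {V : Type*} (A : V → V → Prop) (cov : Set V) {w u : V} (hw : w ∉ cov)
    (h : Relation.ReflTransGen (fun a b => A a b ∧ a ∉ cov ∧ b ∉ cov) w u) :
    ∃ Q : List V, Q ≠ [] ∧ Q.Nodup ∧ Q.Chain' A ∧ Q.head? = some w ∧ Q.getLast? = some u ∧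
      ∀ x ∈ Q, x ∉ cov := by
  induction h with
  | refl => exact ⟨[w], by simp, by simp, List.isChain_singleton _, rfl, rfl, by simpa⟩
  | @tail b c hwb hbc ih =>
    obtain ⟨Q, hne, hnd, hch, hhd, hlst, hcov⟩ := ih
    obtain ⟨hAbc, hb, hc⟩ := hbc
    by_cases hcQ : c ∈ Q
    · obtain ⟨Q₁, Q₂, rfl⟩ := List.append_of_mem hcQ
      refine ⟨Q₁ ++ [c], by simp, ?_, ?_, ?_, by simp, ?_⟩
      · exact hnd.sublist (List.Sublist.append_left
          (List.cons_sublist_cons.mpr (List.nil_sublist _)) Q₁)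
      · exact hch.prefix ⟨Q₂, by simp⟩
      · cases Q₁ <;> simp_all
      · intro x hx
        rcases List.mem_append.mp hx with h1 | h1
        · exact hcov x (List.mem_append_left _ h1)
        · simp at h1; subst h1; exact hc
    · refine ⟨Q ++ [c], by simp, ?_, ?_, ?_, by simp, ?_⟩
      · exact List.nodup_append'.mpr ⟨hnd, by simp, by
          intro a ha ha'
          simp at ha'
          subst ha'
          exact hcQ ha⟩
      · refine List.isChain_append.mpr ⟨hch, by simp, ?_⟩
        intro x hx y hy
        simp only [List.head?_cons, Option.mem_def, Option.some.injEq] at hy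
        subst hy
        rw [hlst] at hx
        simp only [Option.mem_def, Option.some.injEq] at hx
        subst hx
        exact hAbc
      · rw [List.head?_append_of_ne_nil _ hne]; exact hhd
      · intro x hx
        rcases List.mem_append.mp hx with h1 | h1
        · exact hcov x h1
        · simp at h1; subst h1; exact hc

lemma exists_king {V : Type*} [Fintype V] (r : V → V → Prop) (hirr : Irreflexive r)
    (S : Set V) (hne : S.Nonempty) (hsc : ∀ a ∈ S, ∀ b ∈ S, a ≠ b → r a b ∨ r b a) :
    ∃ a ∈ S, ∀ b ∈ S, Relation.ReflTransGen (fun x y => r x y ∧ x ∈ S ∧ y ∈ S) a b := by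
  obtain ⟨a, haS, hmaxa⟩ :=
    Set.exists_max_image S (fun x => {y | y ∈ S ∧ r x y}.ncard) (Set.toFinite S) hne
  refine ⟨a, haS, fun b hbS => ?_⟩
  rcases eq_or_ne b a with rfl | hba
  · exact .refl
  by_cases hab : r a b
  · exact .single ⟨hab, haS, hbS⟩
  have hba' : r b a := (hsc a haS b hbS (Ne.symm hba)).resolve_left hab
  by_cases h2 : ∃ z, z ∈ S ∧ r a z ∧ r z b
  · obtain ⟨z, hzS, hz1, hz2⟩ := h2
    exact .tail (.single ⟨hz1, haS, hzS⟩) ⟨hz2, hzS, hbS⟩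
  · exfalso
    push_neg at h2
    have hsub : insert a {y | y ∈ S ∧ r a y} ⊆ {y | y ∈ S ∧ r b y} := by
      intro z hz
      rcases Set.mem_insert_iff.mp hz with rfl | ⟨hzS, haz⟩
      · exact ⟨haS, hba'⟩
      · have hzb : z ≠ b := by rintro rfl; exact hab haz
        exact ⟨hzS, (hsc z hzS b hbS hzb).resolve_left (fun h => h2 z hzS haz h)⟩
    have h3 := Set.ncard_le_ncard hsub (Set.toFinite _)
    rw [Set.ncard_insert_of_notMem (by simp [hirr a]) (Set.toFinite _)] at h3
    have h4 := hmaxa b hbS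
    omega

lemma aux_ins {V : Type*} [Fintype V] (A : V → V → Prop) {k : ℕ} {s : V} {t : Fin k → V}
    {L : Fin k → List V} (hL : IsSTSystem A s t L)
    (hmax : ∀ P : Fin k → List V, IsSTSystem A s t P →
      (coverSet P).ncard ≤ (coverSet L).ncard)
    {j : Fin k} {l₁ l₂ Q : List V} {p q : V}
    (hPj : L j = l₁ ++ p :: q :: l₂)
    (hQne : Q ≠ []) (hQnd : Q.Nodup) (hQch : Q.Chain' A)
    (hQH : ∀ x ∈ Q, x ∉ coverSet L)
    (hpQ : ∀ w ∈ Q.head?, A p w) (hQq : ∀ w ∈ Q.getLast?, A w q) : False := by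
  classical
  set newL : Fin k → List V := Function.update L j (l₁ ++ p :: (Q ++ q :: l₂)) with hnewL
  have hmemL : ∀ x ∈ L j, x ∈ coverSet L := fun x hx => ⟨j, hx⟩
  have hold : L j = (l₁ ++ [p]) ++ (q :: l₂) := by rw [hPj]; simp
  have hnewj : newL j = (l₁ ++ [p]) ++ (Q ++ q :: l₂) := by
    rw [hnewL, Function.update_self]; simp
  have hdip := hL.1 j
  rw [hold] at hdip
  obtain ⟨hne0, hnd0, hch0, hhd0, hlst0⟩ := hdip
  have hndα : (l₁ ++ [p]).Nodup := (List.nodup_append'.mp hnd0).1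
  have hndβ : (q :: l₂).Nodup := (List.nodup_append'.mp hnd0).2.1
  have hdisjαβ : (l₁ ++ [p]).Disjoint (q :: l₂) := (List.nodup_append'.mp hnd0).2.2
  have hsubα : ∀ x ∈ l₁ ++ [p], x ∈ coverSet L := fun x hx =>
    hmemL x (by rw [hold]; exact List.mem_append_left _ hx)
  have hsubβ : ∀ x ∈ q :: l₂, x ∈ coverSet L := fun x hx =>
    hmemL x (by rw [hold]; exact List.mem_append_right _ hx)
  have hndnew : ((l₁ ++ [p]) ++ (Q ++ q :: l₂)).Nodup := by
    rw [List.nodup_append']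
    refine ⟨hndα, ?_, ?_⟩
    · rw [List.nodup_append']
      exact ⟨hQnd, hndβ, fun x hxQ hxβ => hQH x hxQ (hsubβ x hxβ)⟩
    · intro x hxα hx
      rcases List.mem_append.mp hx with hxQ | hxβ
      · exact hQH x hxQ (hsubα x hxα)
      · exact hdisjαβ hxα hxβ
  have hchnew : ((l₁ ++ [p]) ++ (Q ++ q :: l₂)).Chain' A := by
    show List.IsChain A _
    rw [List.isChain_append]
    refine ⟨hch0.prefix ⟨q :: l₂, rfl⟩, ?_, ?_⟩
    · rw [List.isChain_append]
      refine ⟨hQch, hch0.suffix ⟨l₁ ++ [p], rfl⟩, ?_⟩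
      intro x hx y hy
      simp only [List.head?_cons, Option.mem_def, Option.some.injEq] at hy
      subst hy
      exact hQq x hx
    · intro x hx y hy
      rw [List.getLast?_concat] at hx
      simp only [Option.mem_def, Option.some.injEq] at hx
      subst hx
      rw [List.head?_append_of_ne_nil _ hQne] at hy
      exact hpQ y hy
  have hhdnew : ((l₁ ++ [p]) ++ (Q ++ q :: l₂)).head? = some s := by
    rw [List.head?_append_of_ne_nil _ (by simp : l₁ ++ [p] ≠ [])]
    rw [List.head?_append_of_ne_nil _ (by simp : l₁ ++ [p] ≠ [])] at hhd0
    exact hhd0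
  have hlstnew : ((l₁ ++ [p]) ++ (Q ++ q :: l₂)).getLast? = some (t j) := by
    rw [List.getLast?_append_of_ne_nil _ (by simp : Q ++ q :: l₂ ≠ ([] : List V))]
    rw [List.getLast?_append_of_ne_nil _ (by simp : q :: l₂ ≠ ([] : List V))]
    rw [List.getLast?_append_of_ne_nil _ (by simp : q :: l₂ ≠ ([] : List V))] at hlst0
    exact hlst0
  have hmemnew : ∀ x, x ∈ newL j → x ∈ L j ∨ x ∈ Q := by
    intro x hx
    rw [hnewj] at hx
    rcases List.mem_append.mp hx with h1 | h2
    · left; rw [hold]; exact List.mem_append_left _ h1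
    · rcases List.mem_append.mp h2 with h3 | h4
      · right; exact h3
      · left; rw [hold]; exact List.mem_append_right _ h4
  have hsys : IsSTSystem A s t newL := by
    constructor
    · intro i
      by_cases hij : i = j
      · subst hij
        rw [show newL i = (l₁ ++ [p]) ++ (Q ++ q :: l₂) from hnewj]
        exact ⟨by simp, hndnew, hchnew, hhdnew, hlstnew⟩
      · rw [hnewL, Function.update_of_ne hij]; exact hL.1 i
    · intro i i' hii' v hvi hvi'
      by_cases hij : i = j
      · subst hij
        have hvi'2 : v ∈ L i' := by
          rw [hnewL, Function.update_of_ne (Ne.symm hii')] at hvi'; exact hvi'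
        rcases hmemnew v hvi with h | h
        · exact hL.2 i i' hii' v h hvi'2
        · exact absurd ⟨i', hvi'2⟩ (hQH v h)
      · by_cases hi'j : i' = j
        · subst hi'j
          have hvi2 : v ∈ L i := by
            rw [hnewL, Function.update_of_ne hij] at hvi; exact hvi
          rcases hmemnew v hvi' with h | h
          · exact hL.2 i i' hii' v hvi2 h
          · exact absurd ⟨i, hvi2⟩ (hQH v h)
        · rw [hnewL, Function.update_of_ne hij] at hvi
          rw [hnewL, Function.update_of_ne hi'j] at hvi'
          exact hL.2 i i' hii' v hvi hvi'
  have hsubcov : coverSet L ⊆ coverSet newL := by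
    rintro v ⟨i, hvi⟩
    by_cases hij : i = j
    · subst hij
      refine ⟨i, ?_⟩
      rw [show newL i = (l₁ ++ [p]) ++ (Q ++ q :: l₂) from hnewj]
      rw [hold] at hvi
      rcases List.mem_append.mp hvi with h | h
      · exact List.mem_append_left _ h
      · exact List.mem_append_right _ (List.mem_append_right _ h)
    · exact ⟨i, by rw [hnewL, Function.update_of_ne hij]; exact hvi⟩
  obtain ⟨w, hwQ⟩ : ∃ w, Q.head? = some w := by
    cases Q with
    | nil => exact absurd rfl hQne
    | cons a l => exact ⟨a, rfl⟩
  have hwmem : w ∈ Q := List.mem_of_mem_head? (by rw [hwQ]; rfl)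
  have hwnew : w ∈ coverSet newL :=
    ⟨j, by rw [hnewj]; exact List.mem_append_right _ (List.mem_append_left _ hwmem)⟩
  have hnecov : coverSet L ≠ coverSet newL := fun he => hQH w hwmem (he ▸ hwnew)
  have hlt := Set.ncard_lt_ncard (hsubcov.ssubset_of_ne hnecov) (Set.toFinite _)
  have hle := hmax newL hsys
  omega

theorem stmt_11 {V : Type*} [Fintype V] (A : V → V → Prop)
    (hirr : Irreflexive A) (hsc : Semicomplete A)
    (k : ℕ) (hk : 2 ≤ k)
    (hcard : (9 * k) ^ 5 ≤ Fintype.card V)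
    (hdeg : ∀ v : V, (Fintype.card V + k) / 2 ≤ {w : V | A v w}.ncard ∧
      (Fintype.card V + k) / 2 ≤ {w : V | A w v}.ncard)
    (s : V) (t : Fin k → V) (htinj : Function.Injective t)
    (hst : ∀ i, t i ≠ s)
    (L : Fin k → List V) (hL : IsSTSystem A s t L)
    (hmax : ∀ P : Fin k → List V, IsSTSystem A s t P →
      (coverSet P).ncard ≤ (coverSet L).ncard)
    (hncov : coverSet L ≠ Set.univ)
    (VH : Set V) (hVH : VH = (coverSet L)ᶜ)
    (F R : Set V)
    (hF : F = {x ∈ coverSet L | ∃ y ∈ VH, A y x})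
    (hR : R = {x ∈ coverSet L | ∃ y ∈ VH, A x y}) :
    (coverSet L).ncard ≤ ((F \ R) ∪ (R \ F)).ncard + k := by
  classical
  have hmemF : ∀ x, x ∈ F ↔ x ∈ coverSet L ∧ ∃ y, y ∉ coverSet L ∧ A y x := by
    intro x
    rw [hF, hVH]
    simp [Set.mem_compl_iff]
  have hmemR : ∀ x, x ∈ R ↔ x ∈ coverSet L ∧ ∃ y, y ∉ coverSet L ∧ A x y := by
    intro x
    rw [hR, hVH]
    simp [Set.mem_compl_iff]
  obtain ⟨h₀, hh₀⟩ : ∃ h₀, h₀ ∉ coverSet L := by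
    by_contra h
    push_neg at h
    exact hncov (Set.eq_univ_of_forall h)
  have hkpos : 0 < k := by omega
  obtain ⟨hm, hhm, hkingm⟩ := exists_king A hirr {v | v ∉ coverSet L} ⟨h₀, hh₀⟩
    (fun a _ b _ hab => hsc a b hab)
  obtain ⟨hp, hhp, hkingp⟩ := exists_king (fun a b => A b a) (fun x hx => hirr x hx)
    {v | v ∉ coverSet L} ⟨h₀, hh₀⟩ (fun a _ b _ hab => hsc b a (Ne.symm hab))
  have hhm' : hm ∉ coverSet L := hhm
  have hhp' : hp ∉ coverSet L := hhp
  have hking : ∀ u, u ∉ coverSet L →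
      Relation.ReflTransGen (fun a b => A a b ∧ a ∉ coverSet L ∧ b ∉ coverSet L) hm u :=
    fun u hu => hkingm u hu
  have hking' : ∀ u, u ∉ coverSet L →
      Relation.ReflTransGen (fun a b => A a b ∧ a ∉ coverSet L ∧ b ∉ coverSet L) u hp := by
    intro u hu
    exact Relation.ReflTransGen.mono (fun x y hxy => ⟨hxy.1, hxy.2.2, hxy.2.1⟩) _ _
      ((hkingp u hu).swap)
  have step : ∀ (j : Fin k) (l₁ : List V) (x c : V) (l₂ : List V),
      L j = l₁ ++ x :: c :: l₂ →
      (∃ w, w ∉ coverSet L ∧ A x w ∧ ∀ u, u ∉ coverSet L →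
        Relation.ReflTransGen (fun a b => A a b ∧ a ∉ coverSet L ∧ b ∉ coverSet L) w u) →
      ∀ u, u ∉ coverSet L → ¬ A u c := by
    intro j l₁ x c l₂ hPj ht u hu hAuc
    obtain ⟨w, hw, hxw, hreach⟩ := ht
    obtain ⟨Qp, hne, hnd, hch, hhd, hlst, hcovQ⟩ := exists_path A (coverSet L) hw (hreach u hu)
    refine aux_ins A hL hmax hPj hne hnd hch hcovQ ?_ ?_
    · intro y hy
      rw [hhd] at hy
      simp only [Option.mem_def, Option.some.injEq] at hy
      subst hy; exact hxw
    · intro y hy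
      rw [hlst] at hy
      simp only [Option.mem_def, Option.some.injEq] at hy
      subst hy; exact hAuc
  have step' : ∀ (j : Fin k) (l₁ : List V) (c x : V) (l₂ : List V),
      L j = l₁ ++ c :: x :: l₂ →
      (∃ w, w ∉ coverSet L ∧ A w x ∧ ∀ u, u ∉ coverSet L →
        Relation.ReflTransGen (fun a b => A a b ∧ a ∉ coverSet L ∧ b ∉ coverSet L) u w) →
      ∀ u, u ∉ coverSet L → ¬ A c u := by
    intro j l₁ c x l₂ hPj ht u hu hAcu
    obtain ⟨w, hw, hwx, hreach⟩ := ht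
    obtain ⟨Qp, hne, hnd, hch, hhd, hlst, hcovQ⟩ := exists_path A (coverSet L) hu (hreach u hu)
    refine aux_ins A hL hmax hPj hne hnd hch hcovQ ?_ ?_
    · intro y hy
      rw [hhd] at hy
      simp only [Option.mem_def, Option.some.injEq] at hy
      subst hy; exact hAcu
    · intro y hy
      rw [hlst] at hy
      simp only [Option.mem_def, Option.some.injEq] at hy
      subst hy; exact hwx
  have chainA : ∀ (l₂ : List V) (x : V) (l₁ : List V) (j : Fin k),
      L j = l₁ ++ x :: l₂ →
      (∃ w, w ∉ coverSet L ∧ A x w ∧ ∀ u, u ∉ coverSet L →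
        Relation.ReflTransGen (fun a b => A a b ∧ a ∉ coverSet L ∧ b ∉ coverSet L) w u) →
      ∀ y ∈ l₂, ∀ u, u ∉ coverSet L → ¬ A u y := by
    intro l₂
    induction l₂ with
    | nil => intro x l₁ j _ _ y hy; simp at hy
    | cons c l₂' ih =>
      intro x l₁ j hPj htrig y hy
      have hcA : ∀ u, u ∉ coverSet L → ¬ A u c := step j l₁ x c l₂' hPj htrig
      have hcCov : c ∈ coverSet L := ⟨j, by rw [hPj]; simp⟩
      have hctrig : ∃ w, w ∉ coverSet L ∧ A c w ∧ ∀ u, u ∉ coverSet L →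
          Relation.ReflTransGen (fun a b => A a b ∧ a ∉ coverSet L ∧ b ∉ coverSet L) w u := by
        refine ⟨hm, hhm', ?_, hking⟩
        have hne : c ≠ hm := fun he => hhm' (he ▸ hcCov)
        exact (hsc c hm hne).resolve_right (hcA hm hhm')
      rcases List.mem_cons.mp hy with rfl | hy'
      · exact hcA
      · exact ih c (l₁ ++ [x]) j (by rw [hPj]; simp) hctrig y hy'
  have chainB : ∀ (l₂ : List V) (x y : V) (l₁ : List V) (j : Fin k),
      L j = l₁ ++ y :: l₂ → x ∈ l₂ →
      (∃ w, w ∉ coverSet L ∧ A w x ∧ ∀ u, u ∉ coverSet L →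
        Relation.ReflTransGen (fun a b => A a b ∧ a ∉ coverSet L ∧ b ∉ coverSet L) u w) →
      ∀ u, u ∉ coverSet L → ¬ A y u := by
    intro l₂
    induction l₂ with
    | nil => intro x y l₁ j _ hx _; simp at hx
    | cons c l₂' ih =>
      intro x y l₁ j hPj hx htrig
      rcases List.mem_cons.mp hx with rfl | hx'
      · exact step' j l₁ y x l₂' hPj htrig
      · have hcB : ∀ u, u ∉ coverSet L → ¬ A c u :=
          ih x c (l₁ ++ [y]) j (by rw [hPj]; simp) hx' htrig
        have hcCov : c ∈ coverSet L := ⟨j, by rw [hPj]; simp⟩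
        have hctrig : ∃ w, w ∉ coverSet L ∧ A w c ∧ ∀ u, u ∉ coverSet L →
            Relation.ReflTransGen (fun a b => A a b ∧ a ∉ coverSet L ∧ b ∉ coverSet L) u w := by
          refine ⟨hp, hhp', ?_, hking'⟩
          have hne : hp ≠ c := fun he => hhp' (he ▸ hcCov)
          exact (hsc hp c hne).resolve_right (hcB hp hhp')
        exact step' j l₁ y c l₂' hPj hctrig
  obtain ⟨pick, hpick⟩ : ∃ f : V → Fin k, ∀ v, v ∈ coverSet L → v ∈ L (f v) := by
    refine ⟨fun v => if h : ∃ i, v ∈ L i then h.choose else ⟨0, hkpos⟩, fun v hv => ?_⟩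
    have h : ∃ i, v ∈ L i := hv
    simp only [dif_pos h]
    exact h.choose_spec
  have key : (F ∩ R).ncard ≤ k := by
    by_cases hcase : Relation.ReflTransGen
        (fun a b => A a b ∧ a ∉ coverSet L ∧ b ∉ coverSet L) hp hm
    · -- Case 1 : the uncovered part is "strongly connected enough"
      have hinj : Set.InjOn pick (F ∩ R) := by
        intro x hxFR y hyFR hxy
        by_contra hne
        have hxc : x ∈ coverSet L := ((hmemF x).mp hxFR.1).1
        have hyc : y ∈ coverSet L := ((hmemF y).mp hyFR.1).1
        have hxL : x ∈ L (pick x) := hpick x hxc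
        have hyL : y ∈ L (pick x) := by rw [hxy]; exact hpick y hyc
        have htr : ∀ z, z ∈ F ∩ R → (∃ w, w ∉ coverSet L ∧ A z w ∧ ∀ u, u ∉ coverSet L →
            Relation.ReflTransGen (fun a b => A a b ∧ a ∉ coverSet L ∧ b ∉ coverSet L) w u) := by
          intro z hz
          obtain ⟨hzc, w, hw, hzw⟩ := (hmemR z).mp hz.2
          exact ⟨w, hw, hzw, fun u hu => ((hking' w hw).trans hcase).trans (hking u hu)⟩
        rcases before_total hxL hyL hne with ⟨m₁, m₂, hdec, hy2⟩ | ⟨m₁, m₂, hdec, hx2⟩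
        · obtain ⟨hyc', w, hw, hAwy⟩ := (hmemF y).mp hyFR.1
          exact chainA m₂ x m₁ (pick x) hdec (htr x hxFR) y hy2 w hw hAwy
        · obtain ⟨hxc', w, hw, hAwx⟩ := (hmemF x).mp hxFR.1
          exact chainA m₂ y m₁ (pick x) hdec (htr y hyFR) x hx2 w hw hAwx
      calc (F ∩ R).ncard ≤ (Set.univ : Set (Fin k)).ncard :=
            Set.ncard_le_ncard_of_injOn pick (fun a _ => Set.mem_univ _) hinj (Set.toFinite _)
        _ = k := by rw [Set.ncard_univ, Nat.card_eq_fintype_card, Fintype.card_fin]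
    · -- Case 2 : two "extreme" strong components
      set SAs : Set V := {v | v ∈ coverSet L ∧ ∀ u, u ∉ coverSet L → ¬ A u v} with hSAs
      set SBs : Set V := {v | v ∈ coverSet L ∧ ∀ u, u ∉ coverSet L → ¬ A v u} with hSBs
      set G1 : Set V := {z | z ∈ coverSet L ∧ A z hm ∧ ¬ (∀ u, u ∉ coverSet L → ¬ A u z)}
        with hG1s
      set G2 : Set V := {z | z ∈ coverSet L ∧ A hp z ∧ ¬ (∀ u, u ∉ coverSet L → ¬ A z u)}
        with hG2s
      set Sm : Set V := {v | v ∉ coverSet L ∧ ∀ u, u ∉ coverSet L →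
        Relation.ReflTransGen (fun a b => A a b ∧ a ∉ coverSet L ∧ b ∉ coverSet L) v u}
        with hSm
      set Sp : Set V := {v | v ∉ coverSet L ∧ ∀ u, u ∉ coverSet L →
        Relation.ReflTransGen (fun a b => A a b ∧ a ∉ coverSet L ∧ b ∉ coverSet L) u v}
        with hSp
      have hSmmem : hm ∈ Sm := by rw [hSm]; exact ⟨hhm', hking⟩
      have hSpmem : hp ∈ Sp := by rw [hSp]; exact ⟨hhp', hking'⟩
      have hdisj : Disjoint Sm Sp := by
        rw [Set.disjoint_left]
        intro v hvSm hvSp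
        rw [hSm] at hvSm
        rw [hSp] at hvSp
        exact hcase ((hvSp.2 hp hhp').trans (hvSm.2 hm hhm'))
      have hG1k : G1.ncard ≤ k := by
        refine le_trans (Set.ncard_le_ncard_of_injOn pick (fun a _ => Set.mem_univ _) ?_
          (Set.toFinite _)) (le_of_eq (by rw [Set.ncard_univ, Nat.card_eq_fintype_card,
            Fintype.card_fin]))
        intro z hz z' hz' hzz'
        by_contra hne
        rw [hG1s] at hz hz'
        obtain ⟨hzc, hzhm, hzF⟩ := hz
        obtain ⟨hz'c, hz'hm, hz'F⟩ := hz'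
        have hzL : z ∈ L (pick z) := hpick z hzc
        have hz'L : z' ∈ L (pick z) := by rw [hzz']; exact hpick z' hz'c
        rcases before_total hzL hz'L hne with ⟨m₁, m₂, hdec, h2⟩ | ⟨m₁, m₂, hdec, h2⟩
        · exact hz'F (chainA m₂ z m₁ (pick z) hdec ⟨hm, hhm', hzhm, hking⟩ z' h2)
        · exact hzF (chainA m₂ z' m₁ (pick z) hdec ⟨hm, hhm', hz'hm, hking⟩ z h2)
      have hG2k : G2.ncard ≤ k := by
        refine le_trans (Set.ncard_le_ncard_of_injOn pick (fun a _ => Set.mem_univ _) ?_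
          (Set.toFinite _)) (le_of_eq (by rw [Set.ncard_univ, Nat.card_eq_fintype_card,
            Fintype.card_fin]))
        intro z hz z' hz' hzz'
        by_contra hne
        rw [hG2s] at hz hz'
        obtain ⟨hzc, hzhp, hzF⟩ := hz
        obtain ⟨hz'c, hz'hp, hz'F⟩ := hz'
        have hzL : z ∈ L (pick z) := hpick z hzc
        have hz'L : z' ∈ L (pick z) := by rw [hzz']; exact hpick z' hz'c
        rcases before_total hzL hz'L hne with ⟨m₁, m₂, hdec, h2⟩ | ⟨m₁, m₂, hdec, h2⟩
        · exact hzF (chainB m₂ z' z m₁ (pick z) hdec h2 ⟨hp, hhp', hz'hp, hking'⟩)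
        · exact hz'F (chainB m₂ z z' m₁ (pick z) hdec h2 ⟨hp, hhp', hzhp, hking'⟩)
      have hsub1 : {w | A w hm} ⊆ (Sm \ {hm}) ∪ (SAs ∪ G1) := by
        intro y hy
        by_cases hyc : y ∈ coverSet L
        · right
          by_cases hySA : ∀ u, u ∉ coverSet L → ¬ A u y
          · left; rw [hSAs]; exact ⟨hyc, hySA⟩
          · right; rw [hG1s]; exact ⟨hyc, hy, hySA⟩
        · left
          refine ⟨?_, fun h => ?_⟩
          · rw [hSm]
            exact ⟨hyc, fun u hu => Relation.ReflTransGen.head ⟨hy, hyc, hhm'⟩ (hking u hu)⟩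
          · simp only [Set.mem_singleton_iff] at h
            subst h
            exact hirr _ hy
      have hsub2 : {w | A hp w} ⊆ (Sp \ {hp}) ∪ (SBs ∪ G2) := by
        intro y hy
        by_cases hyc : y ∈ coverSet L
        · right
          by_cases hySB : ∀ u, u ∉ coverSet L → ¬ A y u
          · left; rw [hSBs]; exact ⟨hyc, hySB⟩
          · right; rw [hG2s]; exact ⟨hyc, hy, hySB⟩
        · left
          refine ⟨?_, fun h => ?_⟩
          · rw [hSp]
            exact ⟨hyc, fun u hu => Relation.ReflTransGen.tail (hking' u hu) ⟨hy, hhp', hyc⟩⟩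
          · simp only [Set.mem_singleton_iff] at h
            subst h
            exact hirr _ hy
      have hd1 : (Fintype.card V + k) / 2 ≤ (Sm \ {hm}).ncard + (SAs.ncard + G1.ncard) :=
        calc (Fintype.card V + k) / 2 ≤ {w | A w hm}.ncard := (hdeg hm).2
          _ ≤ ((Sm \ {hm}) ∪ (SAs ∪ G1)).ncard := Set.ncard_le_ncard hsub1 (Set.toFinite _)
          _ ≤ (Sm \ {hm}).ncard + (SAs ∪ G1).ncard := Set.ncard_union_le _ _
          _ ≤ (Sm \ {hm}).ncard + (SAs.ncard + G1.ncard) :=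
            Nat.add_le_add_left (Set.ncard_union_le _ _) _
      have hd2 : (Fintype.card V + k) / 2 ≤ (Sp \ {hp}).ncard + (SBs.ncard + G2.ncard) :=
        calc (Fintype.card V + k) / 2 ≤ {w | A hp w}.ncard := (hdeg hp).1
          _ ≤ ((Sp \ {hp}) ∪ (SBs ∪ G2)).ncard := Set.ncard_le_ncard hsub2 (Set.toFinite _)
          _ ≤ (Sp \ {hp}).ncard + (SBs ∪ G2).ncard := Set.ncard_union_le _ _
          _ ≤ (Sp \ {hp}).ncard + (SBs.ncard + G2.ncard) :=
            Nat.add_le_add_left (Set.ncard_union_le _ _) _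
      have he1 : (Sm \ {hm}).ncard + 1 = Sm.ncard :=
        Set.ncard_diff_singleton_add_one hSmmem (Set.toFinite _)
      have he2 : (Sp \ {hp}).ncard + 1 = Sp.ncard :=
        Set.ncard_diff_singleton_add_one hSpmem (Set.toFinite _)
      have hun : Sm.ncard + Sp.ncard ≤ ((coverSet L)ᶜ).ncard := by
        rw [← Set.ncard_union_eq hdisj (Set.toFinite _) (Set.toFinite _)]
        refine Set.ncard_le_ncard ?_ (Set.toFinite _)
        rintro v (hv | hv)
        · rw [hSm] at hv; exact hv.1
        · rw [hSp] at hv; exact hv.1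
      have hcompl : (coverSet L).ncard + ((coverSet L)ᶜ).ncard = Fintype.card V := by
        rw [Set.ncard_add_ncard_compl, Nat.card_eq_fintype_card]
      have hsetEq : SAs ∪ (SBs ∪ (F ∩ R)) = coverSet L := by
        apply Set.Subset.antisymm
        · rintro v (hv | (hv | hv))
          · rw [hSAs] at hv; exact hv.1
          · rw [hSBs] at hv; exact hv.1
          · exact ((hmemF v).mp hv.1).1
        · intro v hv
          by_cases hvF : ∃ y, y ∉ coverSet L ∧ A y v
          · by_cases hvR : ∃ y, y ∉ coverSet L ∧ A v y
            · right; right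
              exact ⟨(hmemF v).mpr ⟨hv, hvF⟩, (hmemR v).mpr ⟨hv, hvR⟩⟩
            · right; left
              rw [hSBs]
              push_neg at hvR
              exact ⟨hv, hvR⟩
          · left
            rw [hSAs]
            push_neg at hvF
            exact ⟨hv, hvF⟩
      have hdisj1 : Disjoint SAs (SBs ∪ (F ∩ R)) := by
        rw [Set.disjoint_left]
        rintro v hvA (hv | hv)
        · rw [hSAs] at hvA
          rw [hSBs] at hv
          have hne : v ≠ h₀ := fun he => hh₀ (he ▸ hvA.1)
          rcases hsc v h₀ hne with h | h
          · exact hv.2 h₀ hh₀ h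
          · exact hvA.2 h₀ hh₀ h
        · rw [hSAs] at hvA
          obtain ⟨_, w, hw, hAwv⟩ := (hmemF v).mp hv.1
          exact hvA.2 w hw hAwv
      have hdisj2 : Disjoint SBs (F ∩ R) := by
        rw [Set.disjoint_left]
        rintro v hvB hv
        rw [hSBs] at hvB
        obtain ⟨_, w, hw, hAvw⟩ := (hmemR v).mp hv.2
        exact hvB.2 w hw hAvw
      have hpartition : SAs.ncard + (SBs.ncard + (F ∩ R).ncard) = (coverSet L).ncard := by
        rw [← Set.ncard_union_eq hdisj2 (Set.toFinite _) (Set.toFinite _),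
          ← Set.ncard_union_eq hdisj1 (Set.toFinite _) (Set.toFinite _), hsetEq]
      omega
  have hFRsub : F ∩ R ⊆ coverSet L := fun v hv => ((hmemF v).mp hv.1).1
  have hsplit : ((F \ R) ∪ (R \ F)) ∪ (F ∩ R) = coverSet L := by
    apply Set.Subset.antisymm
    · rintro v ((⟨h1, _⟩ | ⟨h1, _⟩) | h)
      · exact ((hmemF v).mp h1).1
      · exact ((hmemR v).mp h1).1
      · exact hFRsub h
    · intro v hv
      by_cases hvF : v ∈ F
      · by_cases hvR : v ∈ R
        · right; exact ⟨hvF, hvR⟩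
        · left; left; exact ⟨hvF, hvR⟩
      · have hvR : v ∈ R := by
          have hne : v ≠ h₀ := fun he => hh₀ (he ▸ hv)
          rcases hsc v h₀ hne with h | h
          · exact (hmemR v).mpr ⟨hv, h₀, hh₀, h⟩
          · exact absurd ((hmemF v).mpr ⟨hv, h₀, hh₀, h⟩) hvF
        left; right; exact ⟨hvR, hvF⟩
  have hdisjf : Disjoint ((F \ R) ∪ (R \ F)) (F ∩ R) := by
    rw [Set.disjoint_left]
    rintro v (⟨h1, h2⟩ | ⟨h1, h2⟩) ⟨h3, h4⟩
    · exact h2 h4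
    · exact h2 h3
  have hfinal := Set.ncard_union_eq hdisjf (Set.toFinite _) (Set.toFinite _)
  rw [hsplit] at hfinal
  omega
end

section
/- With the setup below, for every pair of vertices x, y ∈ V(H) we have d⁻_L(x) + d⁺_L(y) ≤ |V(L)| + k, where d⁻_L(x) denotes the number of in-neighbours of x lying in V(L) and d⁺_L(y) denotes the number of out-neighbours of y lying in V(L). -/
open scoped Classical

/-- count of vertices in a list satisfying a predicate -/
noncomputable def cnt {V : Type*} (c : V → Prop) : List V → ℕ
  | [] => 0
  | v :: r => (if c v then 1 else 0) + cnt c r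

lemma cnt_nil {V : Type*} (c : V → Prop) : cnt c [] = 0 := rfl

lemma cnt_cons {V : Type*} (c : V → Prop) (v : V) (r : List V) :
    cnt c (v :: r) = (if c v then 1 else 0) + cnt c r := rfl

lemma cnt_true {V : Type*} : ∀ (p : List V), cnt (fun _ => True) p = p.length
  | [] => rfl
  | v :: r => by simp [cnt_cons, cnt_true r]; omega

lemma cnt_eq_card_filter {V : Type*} [DecidableEq V] (c : V → Prop) :
    ∀ (p : List V), p.Nodup → cnt c p = (p.toFinset.filter c).card
  | [], _ => by simp [cnt_nil]
  | v :: r, h => by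
    rcases List.nodup_cons.mp h with ⟨hv, hr⟩
    rw [cnt_cons, cnt_eq_card_filter c r hr]
    by_cases hc : c v
    · have : v ∉ r.toFinset.filter c := by simp [hv]
      simp [hc, Finset.filter_insert, Finset.card_insert_of_notMem this]; omega
    · simp [hc, Finset.filter_insert]

/-- the pair-counting lemma along a chain -/
lemma cnt_pair {V : Type*} (c d : V → Prop) :
    ∀ (p : List V), p.Chain' (fun a b => ¬ (c a ∧ d b)) →
      ∀ v, p.head? = some v →
      cnt c p + cnt d p ≤ p.length + (if d v then 1 else 0)
  | [], _, v, hv => by simp at hv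
  | [u], _, v, hv => by
    simp only [List.head?] at hv
    injection hv with hv; subst hv
    simp only [cnt_cons, cnt_nil, List.length]
    by_cases hc : c u <;> by_cases hd : d u <;> simp [hc, hd]
  | u :: w :: r, hp, v, hv => by
    simp only [List.head?] at hv
    injection hv with hv; subst hv
    rcases List.isChain_cons_cons.mp hp with ⟨hR, hp'⟩
    have ih := cnt_pair c d (w :: r) hp' w rfl
    simp only [cnt_cons, List.length] at ih ⊢
    have key : (if c u then (1:ℕ) else 0) + (if d w then 1 else 0) ≤ 1 := by
      by_cases h1 : c u <;> by_cases h3 : d w <;> simp [h1, h3]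
      exact absurd ⟨h1, h3⟩ hR
    by_cases h1 : c u <;> by_cases h2 : d u <;> by_cases h3 : d w <;>
      simp only [h1, h2, h3, if_true, if_false] at ih key ⊢ <;> omega

/-- decompose a failure of Chain' into an adjacent bad pair -/
lemma not_chain'_decomp {α : Type*} {R : α → α → Prop} :
    ∀ {p : List α}, ¬ p.Chain' R →
      ∃ l₁ u w l₂, p = l₁ ++ u :: w :: l₂ ∧ ¬ R u w
  | [], h => absurd List.isChain_nil h
  | [u], h => absurd (List.isChain_singleton u) h
  | u :: w :: r, h => by
    unfold List.Chain' at h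
    rw [List.isChain_cons_cons] at h
    by_cases hR : R u w
    · have h2 : ¬ (w :: r).Chain' R := fun hc => h ⟨hR, hc⟩
      obtain ⟨l₁, a, b, l₂, hdec, hab⟩ := not_chain'_decomp h2
      exact ⟨u :: l₁, a, b, l₂, by rw [hdec]; rfl, hab⟩
    · exact ⟨[], u, w, r, rfl, hR⟩

section CNT

variable {V : Type*} {A : V → V → Prop} {k : ℕ} {s : V} {t : Fin k → V} {L : Fin k → List V}

lemma cons_of_system (hL : IsSTSystem A s t L) (i : Fin k) : ∃ r, L i = s :: r := by
  obtain ⟨hne, hnd, hch, hhd, hlast⟩ := hL.1 i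
  cases h : L i with
  | nil => exact absurd h hne
  | cons a r =>
    rw [h] at hhd
    simp only [List.head?] at hhd
    injection hhd with hhd
    exact ⟨r, by rw [hhd]⟩

lemma mem_of_system (hL : IsSTSystem A s t L) (i : Fin k) : s ∈ L i := by
  obtain ⟨r, hr⟩ := cons_of_system hL i
  rw [hr]; exact List.mem_cons_self

lemma sum_cnt (hk : 0 < k) (hL : IsSTSystem A s t L) (c : V → Prop) :
    (∑ i, cnt c (L i)) + (if c s then 1 else 0)
      = {w | w ∈ coverSet L ∧ c w}.ncard + k * (if c s then 1 else 0) := by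
  classical
  set F : Fin k → Finset V := fun i => (L i).toFinset.filter c with hF
  set G : Fin k → Finset V := fun i => (F i).erase s with hG
  have hcnt : ∀ i, cnt c (L i) = (F i).card :=
    fun i => cnt_eq_card_filter c (L i) (hL.1 i).2.1
  have hsF : ∀ i, s ∈ F i ↔ c s := by
    intro i; simp [hF, List.mem_toFinset, mem_of_system hL i]
  have hFG : ∀ i, (F i).card = (G i).card + (if c s then 1 else 0) := by
    intro i
    by_cases hcs : c s
    · simp only [hcs, if_true]
      exact (Finset.card_erase_add_one ((hsF i).mpr hcs)).symm
    · simp [hcs, hG, Finset.erase_eq_of_notMem (fun h => hcs ((hsF i).mp h))]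
  have hdisj : ∀ i ∈ Finset.univ, ∀ j ∈ Finset.univ, i ≠ j →
      Disjoint (G i) (G (j : Fin k)) := by
    intro i _ j _ hij
    rw [Finset.disjoint_left]
    intro v hvi hvj
    simp only [hG, Finset.mem_erase, hF, Finset.mem_filter, List.mem_toFinset] at hvi hvj
    exact hvi.1 (hL.2 i j hij v hvi.2.1 hvj.2.1)
  have hbi : (Finset.univ.biUnion G).card = ∑ i, (G i).card := Finset.card_biUnion hdisj
  have hsG : s ∉ Finset.univ.biUnion G := by
    simp [hG, Finset.mem_biUnion]
  have hcardF : (Finset.univ.biUnion F).card = (∑ i, (G i).card) + (if c s then 1 else 0) := by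
    by_cases hcs : c s
    · have heq : Finset.univ.biUnion F = insert s (Finset.univ.biUnion G) := by
        ext w
        simp only [Finset.mem_biUnion, Finset.mem_univ, true_and, Finset.mem_insert]
        constructor
        · rintro ⟨i, hi⟩
          by_cases hw : w = s
          · exact Or.inl hw
          · exact Or.inr ⟨i, by simp [hG, Finset.mem_erase, hw, hi]⟩
        · rintro (rfl | ⟨i, hi⟩)
          · exact ⟨⟨0, hk⟩, (hsF _).mpr hcs⟩
          · exact ⟨i, (Finset.mem_of_mem_erase hi)⟩
      rw [heq, Finset.card_insert_of_notMem hsG, hbi, if_pos hcs]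
    · have heq : Finset.univ.biUnion F = Finset.univ.biUnion G := by
        apply Finset.biUnion_congr rfl
        intro i _
        show F i = (F i).erase s
        rw [Finset.erase_eq_of_notMem (fun h => hcs ((hsF i).mp h))]
      rw [heq, hbi, if_neg hcs]
      simp
  have hTset : {w | w ∈ coverSet L ∧ c w} = ↑(Finset.univ.biUnion F) := by
    ext w
    simp [coverSet, hF, List.mem_toFinset, Finset.mem_biUnion]
  rw [hTset, Set.ncard_coe_finset, hcardF]
  calc (∑ i, cnt c (L i)) + (if c s then 1 else 0)
      = (∑ i : Fin k, ((G i).card + (if c s then 1 else 0))) + (if c s then 1 else 0) := by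
        rw [Finset.sum_congr rfl (fun i _ => by rw [hcnt i, hFG i])]
    _ = (∑ i, (G i).card) + k * (if c s then 1 else 0) + (if c s then 1 else 0) := by
        rw [Finset.sum_add_distrib, Finset.sum_const, Finset.card_univ, Fintype.card_fin,
          smul_eq_mul]
    _ = (∑ i, (G i).card) + (if c s then 1 else 0) + k * (if c s then 1 else 0) := by ring

end CNT

section INSERT

variable {V : Type*} [Fintype V] {A : V → V → Prop} {k : ℕ} {s : V} {t : Fin k → V}
  {L : Fin k → List V}

lemma insert_absurd (hL : IsSTSystem A s t L)
    (hmax : ∀ P : Fin k → List V, IsSTSystem A s t P →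
      (coverSet P).ncard ≤ (coverSet L).ncard)
    (i₀ : Fin k) (l₁ l₂ : List V) (u w : V) (hdec : L i₀ = l₁ ++ u :: w :: l₂)
    (q : List V) (hq : q ≠ []) (hqn : q.Nodup)
    (hqH : ∀ v ∈ q, v ∉ coverSet L)
    (hch : (u :: (q ++ [w])).Chain' A) : False := by
  classical
  obtain ⟨hne, hnd, hch0, hhd, hlast⟩ := hL.1 i₀
  set p' : List V := l₁ ++ u :: (q ++ w :: l₂) with hp'
  have hperm : p'.Perm (L i₀ ++ q) := by
    have h2 : L i₀ ++ q = l₁ ++ (u :: ((w :: l₂) ++ q)) := by simp [hdec]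
    rw [hp', h2]
    exact List.Perm.append_left l₁ (List.Perm.cons u List.perm_append_comm)
  have hmem : ∀ v, v ∈ p' ↔ (v ∈ L i₀ ∨ v ∈ q) := by
    intro v
    rw [hperm.mem_iff, List.mem_append]
  have hqL : ∀ v ∈ q, v ∉ L i₀ := fun v hv hvL => hqH v hv ⟨i₀, hvL⟩
  have hnd' : p'.Nodup := by
    refine hperm.nodup_iff.mpr (List.Nodup.append hnd hqn ?_)
    exact fun a ha hqa => hqL a hqa ha
  have hch1 : p'.Chain' A := by
    have hch0' : (l₁ ++ u :: w :: l₂).Chain' A := hdec ▸ hch0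
    unfold List.Chain' at hch0' ⊢
    rw [List.isChain_append] at hch0'
    obtain ⟨hc1, hc2, hc3⟩ := hch0'
    rw [hp', List.isChain_append]
    refine ⟨hc1, ?_, ?_⟩
    · have heq : u :: (q ++ w :: l₂) = (u :: (q ++ [w])) ++ l₂ := by simp
      rw [heq, List.isChain_append]
      refine ⟨hch, hc2.tail.tail, ?_⟩
      intro a ha b hb
      have hgl : (u :: (q ++ [w])).getLast? = some w := by
        have heq2 : u :: (q ++ [w]) = (u :: q) ++ [w] := by simp
        rw [heq2, List.getLast?_concat]
      rw [hgl] at ha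
      simp only [Option.mem_def, Option.some.injEq] at ha
      subst ha
      exact (List.isChain_cons.mp hc2.tail).1 b hb
    · intro a ha b hb
      simp only [List.head?, Option.mem_def, Option.some.injEq] at hb
      subst hb
      exact hc3 a ha u (by simp)
  have hhd' : p'.head? = some s := by
    have hhd2 : (l₁ ++ u :: w :: l₂).head? = some s := hdec ▸ hhd
    rw [hp']
    cases l₁ with
    | nil =>
      simp only [List.nil_append, List.head?] at hhd2 ⊢
      exact hhd2
    | cons a l =>
      simp only [List.cons_append, List.head?] at hhd2 ⊢
      exact hhd2
  have hlast' : p'.getLast? = some (t i₀) := by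
    have h1 : L i₀ = (l₁ ++ [u]) ++ (w :: l₂) := by simp [hdec]
    have h2 : p' = (l₁ ++ u :: q) ++ (w :: l₂) := by simp [hp']
    have h3 : (w :: l₂).getLast? = some (t i₀) := by
      rw [h1, List.getLast?_append_of_ne_nil _ (by simp)] at hlast
      exact hlast
    rw [h2, List.getLast?_append_of_ne_nil _ (by simp), h3]
  have hne' : p' ≠ [] := by
    rw [hp']
    cases l₁ <;> simp
  set P : Fin k → List V := Function.update L i₀ p' with hP
  have hPi : P i₀ = p' := by rw [hP, Function.update_self]
  have hPother : ∀ i, i ≠ i₀ → P i = L i := fun i hi => Function.update_of_ne hi _ _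
  have hsys : IsSTSystem A s t P := by
    constructor
    · intro i
      rcases eq_or_ne i i₀ with rfl | hi
      · rw [hPi]
        exact ⟨hne', hnd', hch1, hhd', hlast'⟩
      · rw [hPother i hi]; exact hL.1 i
    · intro i j hij v hvi hvj
      rcases eq_or_ne i i₀ with rfl | hi
      · rw [hPi] at hvi
        rw [hPother j (Ne.symm hij)] at hvj
        rcases (hmem v).mp hvi with h | h
        · exact hL.2 i j hij v h hvj
        · exact absurd ⟨j, hvj⟩ (hqH v h)
      · rcases eq_or_ne j i₀ with rfl | hj
        · rw [hPi] at hvj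
          rw [hPother i hi] at hvi
          rcases (hmem v).mp hvj with h | h
          · exact hL.2 i j hij v hvi h
          · exact absurd ⟨i, hvi⟩ (hqH v h)
        · rw [hPother i hi] at hvi
          rw [hPother j hj] at hvj
          exact hL.2 i j hij v hvi hvj
  have hss : coverSet L ⊂ coverSet P := by
    constructor
    · rintro v ⟨i, hvi⟩
      rcases eq_or_ne i i₀ with rfl | hi
      · exact ⟨i, by rw [hPi]; exact (hmem v).mpr (Or.inl hvi)⟩
      · exact ⟨i, by rw [hPother i hi]; exact hvi⟩
    · intro hsub
      obtain ⟨v₀, hv₀⟩ := List.exists_mem_of_ne_nil q hq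
      have hv₀P : v₀ ∈ coverSet P := ⟨i₀, by rw [hPi]; exact (hmem v₀).mpr (Or.inr hv₀)⟩
      exact hqH v₀ hv₀ (hsub hv₀P)
  exact absurd (hmax P hsys) (not_le.mpr (Set.ncard_lt_ncard hss (Set.toFinite _)))

end INSERT

section MAIN

variable {V : Type*} {A : V → V → Prop}

lemma chain3 {a b c : V} (h1 : A a b) (h2 : A b c) : ([a, b, c] : List V).Chain' A :=
  List.isChain_cons_cons.mpr ⟨h1, List.isChain_cons_cons.mpr ⟨h2, List.isChain_singleton c⟩⟩

lemma chain4 {a b c d : V} (h1 : A a b) (h2 : A b c) (h3 : A c d) :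
    ([a, b, c, d] : List V).Chain' A :=
  List.isChain_cons_cons.mpr ⟨h1, chain3 h2 h3⟩

lemma chain5 {a b c d e : V} (h1 : A a b) (h2 : A b c) (h3 : A c d) (h4 : A d e) :
    ([a, b, c, d, e] : List V).Chain' A :=
  List.isChain_cons_cons.mpr ⟨h1, chain4 h2 h3 h4⟩

end MAIN

theorem stmt_12 {V : Type*} [Fintype V] (A : V → V → Prop)
    (hirr : Irreflexive A) (hsc : Semicomplete A)
    (k : ℕ) (hk : 2 ≤ k)
    (hcard : (9 * k) ^ 5 ≤ Fintype.card V)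
    (hdeg : ∀ v : V, (Fintype.card V + k) / 2 ≤ {w : V | A v w}.ncard ∧
      (Fintype.card V + k) / 2 ≤ {w : V | A w v}.ncard)
    (s : V) (t : Fin k → V) (htinj : Function.Injective t)
    (hst : ∀ i, t i ≠ s)
    (L : Fin k → List V) (hL : IsSTSystem A s t L)
    (hmax : ∀ P : Fin k → List V, IsSTSystem A s t P →
      (coverSet P).ncard ≤ (coverSet L).ncard)
    (hncov : coverSet L ≠ Set.univ)
    (VH : Set V) (hVH : VH = (coverSet L)ᶜ) :
    ∀ x ∈ VH, ∀ y ∈ VH,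
      {w | w ∈ coverSet L ∧ A w x}.ncard + {w | w ∈ coverSet L ∧ A y w}.ncard ≤
        (coverSet L).ncard + k := by

  classical
  intro x hx y hy
  have hk0 : 0 < k := by omega
  have hxH : x ∉ coverSet L := by rw [hVH] at hx; exact hx
  have hyH : y ∉ coverSet L := by rw [hVH] at hy; exact hy
  -- global length identity
  have hΛ : (∑ i, (L i).length) + 1 = (coverSet L).ncard + k := by
    have h := sum_cnt hk0 hL (fun _ => True)
    simp only [if_true] at h
    rw [Finset.sum_congr rfl (fun i _ => cnt_true (L i))] at h
    have h2 : {w | w ∈ coverSet L ∧ True} = coverSet L := by ext w; simp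
    rw [h2] at h
    omega
  -- counting identities
  have hIdA := sum_cnt hk0 hL (fun v => A v x)
  have hIdB := sum_cnt hk0 hL (fun v => A y v)
  by_cases hα : ∀ i, (L i).Chain' (fun a b => ¬ (A a x ∧ A y b))
  · -- no insertion point for the pair: direct counting
    have hbound : ∀ i, cnt (fun v => A v x) (L i) + cnt (fun v => A y v) (L i) ≤
        (L i).length + (if A y s then 1 else 0) := by
      intro i
      obtain ⟨r, hr⟩ := cons_of_system hL i
      exact cnt_pair (fun v => A v x) (fun v => A y v) (L i) (hα i) s (by rw [hr]; rfl)
    have hsum : (∑ i, cnt (fun v => A v x) (L i)) + (∑ i, cnt (fun v => A y v) (L i)) ≤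
        (∑ i, (L i).length) + k * (if A y s then 1 else 0) := by
      have := Finset.sum_le_sum (fun i (_ : i ∈ Finset.univ) => hbound i)
      rw [Finset.sum_add_distrib, Finset.sum_add_distrib, Finset.sum_const,
        Finset.card_univ, Fintype.card_fin, smul_eq_mul] at this
      omega
    by_cases h1 : A s x <;> by_cases h2 : A y s <;>
      simp only [h1, h2, if_true, if_false, mul_one, mul_zero] at hIdA hIdB hsum <;> omega
  · -- there is an insertion point for the pair
    push_neg at hα
    obtain ⟨i₀, hnc⟩ := hα
    obtain ⟨l₁, u, w, l₂, hdec, hR⟩ := not_chain'_decomp hnc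
    obtain ⟨hux, hyw⟩ : A u x ∧ A y w := by tauto
    -- x ≠ y
    have hxy : x ≠ y := by
      rintro rfl
      refine insert_absurd hL hmax i₀ l₁ l₂ u w hdec [x] (by simp) (by simp) ?_ ?_
      · intro v hv
        simp only [List.mem_singleton] at hv
        subst hv; exact hxH
      · exact chain3 hux hyw
    -- ¬ A x y
    have hAxy : ¬ A x y := by
      intro hxy2
      refine insert_absurd hL hmax i₀ l₁ l₂ u w hdec [x, y] (by simp)
        (by simp [hxy]) ?_ ?_
      · intro v hv
        simp only [List.mem_cons, List.mem_singleton, List.not_mem_nil, or_false] at hv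
        rcases hv with rfl | rfl
        · exact hxH
        · exact hyH
      · exact chain4 hux hxy2 hyw
    -- no path x → h → y through uncovered vertices
    have hXY : ∀ h, h ∉ coverSet L → ¬ (A x h ∧ A h y) := by
      rintro h hh ⟨hxh, hhy⟩
      have hhx : h ≠ x := by rintro rfl; exact hirr h hxh
      have hhy' : h ≠ y := by rintro rfl; exact hirr h hhy
      refine insert_absurd hL hmax i₀ l₁ l₂ u w hdec [x, h, y] (by simp)
        (by simp [hxy, hhx.symm, hhy']) ?_ ?_
      · intro v hv
        simp only [List.mem_cons, List.mem_singleton, List.not_mem_nil, or_false] at hv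
        rcases hv with rfl | rfl | rfl
        · exact hxH
        · exact hh
        · exact hyH
      · exact chain5 hux hxh hhy hyw
    -- single-vertex insertion chains
    have hI1 : ∀ i, (L i).Chain' (fun a b => ¬ (A a x ∧ A x b)) := by
      intro i
      by_contra hc
      obtain ⟨l₁', u', w', l₂', hdec', hR'⟩ := not_chain'_decomp hc
      obtain ⟨h1, h2⟩ : A u' x ∧ A x w' := of_not_not hR'
      refine insert_absurd hL hmax i l₁' l₂' u' w' hdec' [x] (by simp) (by simp) ?_ ?_
      · intro v hv
        simp only [List.mem_singleton] at hv
        subst hv; exact hxH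
      · exact chain3 h1 h2
    have hI2 : ∀ i, (L i).Chain' (fun a b => ¬ (A a y ∧ A y b)) := by
      intro i
      by_contra hc
      obtain ⟨l₁', u', w', l₂', hdec', hR'⟩ := not_chain'_decomp hc
      obtain ⟨h1, h2⟩ : A u' y ∧ A y w' := of_not_not hR'
      refine insert_absurd hL hmax i l₁' l₂' u' w' hdec' [y] (by simp) (by simp) ?_ ?_
      · intro v hv
        simp only [List.mem_singleton] at hv
        subst hv; exact hyH
      · exact chain3 h1 h2
    -- per-path pair bounds
    have hbound1 : ∀ i, cnt (fun v => A v x) (L i) + cnt (fun v => A x v) (L i) ≤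
        (L i).length + (if A x s then 1 else 0) := by
      intro i
      obtain ⟨r, hr⟩ := cons_of_system hL i
      exact cnt_pair (fun v => A v x) (fun v => A x v) (L i) (hI1 i) s (by rw [hr]; rfl)
    have hbound2 : ∀ i, cnt (fun v => A v y) (L i) + cnt (fun v => A y v) (L i) ≤
        (L i).length + (if A y s then 1 else 0) := by
      intro i
      obtain ⟨r, hr⟩ := cons_of_system hL i
      exact cnt_pair (fun v => A v y) (fun v => A y v) (L i) (hI2 i) s (by rw [hr]; rfl)
    have hsum1 : (∑ i, cnt (fun v => A v x) (L i)) + (∑ i, cnt (fun v => A x v) (L i)) ≤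
        (∑ i, (L i).length) + k * (if A x s then 1 else 0) := by
      have := Finset.sum_le_sum (fun i (_ : i ∈ Finset.univ) => hbound1 i)
      rw [Finset.sum_add_distrib, Finset.sum_add_distrib, Finset.sum_const,
        Finset.card_univ, Fintype.card_fin, smul_eq_mul] at this
      omega
    have hsum2 : (∑ i, cnt (fun v => A v y) (L i)) + (∑ i, cnt (fun v => A y v) (L i)) ≤
        (∑ i, (L i).length) + k * (if A y s then 1 else 0) := by
      have := Finset.sum_le_sum (fun i (_ : i ∈ Finset.univ) => hbound2 i)
      rw [Finset.sum_add_distrib, Finset.sum_add_distrib, Finset.sum_const,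
        Finset.card_univ, Fintype.card_fin, smul_eq_mul] at this
      omega
    have hIdA' := sum_cnt hk0 hL (fun v => A x v)
    have hIdB' := sum_cnt hk0 hL (fun v => A v y)
    -- sets X and Y in H
    set X : Set V := {h | A x h} ∩ (coverSet L)ᶜ with hXdef
    set Y : Set V := {h | A h y} ∩ (coverSet L)ᶜ with hYdef
    have hdisjXY : Disjoint X Y := by
      rw [Set.disjoint_left]
      rintro h ⟨h1, h2⟩ ⟨h3, h4⟩
      exact hXY h h2 ⟨h1, h3⟩
    have hxXY : x ∉ X ∪ Y := by
      rintro (⟨h1, _⟩ | ⟨h1, _⟩)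
      · exact hirr x h1
      · exact hAxy h1
    have hyXY : y ∉ X ∪ Y := by
      rintro (⟨h1, _⟩ | ⟨h1, _⟩)
      · exact hAxy h1
      · exact hirr y h1
    have hsub : insert x (insert y (X ∪ Y)) ⊆ (coverSet L)ᶜ := by
      rintro v (rfl | rfl | ⟨_, h2⟩ | ⟨_, h2⟩)
      · exact hxH
      · exact hyH
      · exact h2
      · exact h2
    have hcardcompl : (coverSet L).ncard + ((coverSet L)ᶜ).ncard = Fintype.card V := by
      rw [← Nat.card_eq_fintype_card, ← Set.ncard_add_ncard_compl (coverSet L)]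
    have hXYcard : X.ncard + Y.ncard + 2 + (coverSet L).ncard ≤ Fintype.card V := by
      have e1 : (X ∪ Y).ncard = X.ncard + Y.ncard :=
        Set.ncard_union_eq hdisjXY (Set.toFinite _) (Set.toFinite _)
      have e2 : (insert y (X ∪ Y)).ncard = (X ∪ Y).ncard + 1 :=
        Set.ncard_insert_of_notMem hyXY (Set.toFinite _)
      have e3 : (insert x (insert y (X ∪ Y))).ncard = (insert y (X ∪ Y)).ncard + 1 := by
        refine Set.ncard_insert_of_notMem ?_ (Set.toFinite _)
        simp only [Set.mem_insert_iff]
        rintro (rfl | h)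
        · exact hxy rfl
        · exact hxXY h
      have e4 : (insert x (insert y (X ∪ Y))).ncard ≤ ((coverSet L)ᶜ).ncard :=
        Set.ncard_le_ncard hsub (Set.toFinite _)
      omega
    -- degree bounds
    have hdx : (Fintype.card V + k) / 2 ≤ {w | A x w}.ncard := (hdeg x).1
    have hdy : (Fintype.card V + k) / 2 ≤ {w | A w y}.ncard := (hdeg y).2
    have hsplitx : {w | A x w}.ncard ≤ {w | w ∈ coverSet L ∧ A x w}.ncard + X.ncard := by
      have hsub2 : {w | A x w} ⊆ {w | w ∈ coverSet L ∧ A x w} ∪ X := by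
        intro v hv
        by_cases hvL : v ∈ coverSet L
        · exact Or.inl ⟨hvL, hv⟩
        · exact Or.inr ⟨hv, hvL⟩
      calc {w | A x w}.ncard ≤ ({w | w ∈ coverSet L ∧ A x w} ∪ X).ncard :=
            Set.ncard_le_ncard hsub2 (Set.toFinite _)
        _ ≤ _ := Set.ncard_union_le _ _
    have hsplity : {w | A w y}.ncard ≤ {w | w ∈ coverSet L ∧ A w y}.ncard + Y.ncard := by
      have hsub2 : {w | A w y} ⊆ {w | w ∈ coverSet L ∧ A w y} ∪ Y := by
        intro v hv
        by_cases hvL : v ∈ coverSet L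
        · exact Or.inl ⟨hvL, hv⟩
        · exact Or.inr ⟨hv, hvL⟩
      calc {w | A w y}.ncard ≤ ({w | w ∈ coverSet L ∧ A w y} ∪ Y).ncard :=
            Set.ncard_le_ncard hsub2 (Set.toFinite _)
        _ ≤ _ := Set.ncard_union_le _ _
    by_cases h1 : A s x <;> by_cases h2 : A y s <;> by_cases h3 : A x s <;>
      by_cases h4 : A s y <;>
      simp only [h1, h2, h3, h4, if_true, if_false, mul_one, mul_zero] at hIdA hIdB hIdA' hIdB' hsum1 hsum2 <;>
      omega
end

section
/- Let H be a semicomplete digraph on m vertices such that d⁻_H(x) + d⁺_H(y) ≥ m − 1 for every pair of vertices x, y ∈ V(H). Then H is strongly connected. -/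
lemma rtg_dipath {V : Type*} (A : V → V → Prop) {x y : V}
    (h : Relation.ReflTransGen A x y) : ∃ p : List V, IsDipath A p x y := by
  induction h using Relation.ReflTransGen.head_induction_on with
  | refl => exact ⟨[y], by simp [IsDipath]; exact List.isChain_singleton y⟩
  | head hxz _ ih =>
    rename_i x z _
    obtain ⟨p, hne, hnd, hch, hhd, hlast⟩ := ih
    by_cases hx : x ∈ p
    · obtain ⟨q, r, rfl⟩ := List.append_of_mem hx
      refine ⟨x :: r, by simp, ?_, ?_, by simp, ?_⟩
      · exact (List.suffix_append q (x :: r)).sublist.nodup hnd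
      · exact hch.suffix (List.suffix_append q (x :: r))
      · rw [List.getLast?_append] at hlast
        simpa using hlast
    · refine ⟨x :: p, by simp, ?_, ?_, by simp, ?_⟩
      · exact List.nodup_cons.mpr ⟨hx, hnd⟩
      · refine List.isChain_cons.mpr ⟨?_, hch⟩
        intro w hw
        rw [hhd] at hw
        cases hw; exact hxz
      · rw [List.getLast?_cons, hlast]
        cases p with
        | nil => simp at hne
        | cons a l => simp

theorem stmt_15 {V : Type*} [Fintype V] (A : V → V → Prop)
    (hirr : Irreflexive A) (hsc : Semicomplete A)
    (hdeg : ∀ x y : V, Fintype.card V - 1 ≤ {z | A z x}.ncard + {z | A y z}.ncard) :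
    ∀ x y : V, x ≠ y → ∃ p : List V, IsDipath A p x y := by
  intro x y hxy
  by_contra hno
  have hnr : ¬ Relation.ReflTransGen A x y := fun h => hno (rtg_dipath A h)
  set S : Set V := {v | Relation.ReflTransGen A x v} with hS
  have hsub1 : {z | A z y} ⊆ Sᶜ \ {y} := by
    intro z hz
    constructor
    · intro hzS; exact hnr (hzS.tail hz)
    · intro hzy; subst hzy; exact hirr z hz
  have hsub2 : {z | A x z} ⊆ S \ {x} := by
    intro z hz
    exact ⟨Relation.ReflTransGen.single hz, fun h => hirr x (h ▸ hz)⟩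
  have hdisj : Disjoint (Sᶜ \ {y}) (S \ {x}) :=
    Set.disjoint_of_subset Set.diff_subset Set.diff_subset disjoint_compl_left
  have hsubU : (Sᶜ \ {y}) ∪ (S \ {x}) ⊆ ({x, y} : Set V)ᶜ := by
    intro v hv
    rcases hv with ⟨hvS, hvy⟩ | ⟨hvS, hvx⟩
    · intro hvxy
      rcases hvxy with rfl | rfl
      · exact hvS Relation.ReflTransGen.refl
      · exact hvy rfl
    · intro hvxy
      rcases hvxy with rfl | rfl
      · exact hvx rfl
      · exact hnr hvS
  have hcard2 : 2 ≤ Fintype.card V := Fintype.one_lt_card_iff_nontrivial.mpr ⟨⟨x, y, hxy⟩⟩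
  have h1 : {z | A z y}.ncard + {z | A x z}.ncard ≤ Fintype.card V - 2 := by
    calc {z | A z y}.ncard + {z | A x z}.ncard
        ≤ (Sᶜ \ {y}).ncard + (S \ {x}).ncard := by
          gcongr <;> first | exact hsub1 | exact hsub2 | exact Set.toFinite _
      _ = ((Sᶜ \ {y}) ∪ (S \ {x})).ncard := (Set.ncard_union_eq hdisj).symm
      _ ≤ (({x, y} : Set V)ᶜ).ncard := Set.ncard_le_ncard hsubU (Set.toFinite _)
      _ = Fintype.card V - 2 := by
          classical
          have := Set.ncard_add_ncard_compl ({x, y} : Set V)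
          rw [Set.ncard_pair hxy, Nat.card_eq_fintype_card] at this
          omega
  have := hdeg y x
  omega
end

section
/- With the setup below, there exists a vertex v ∈ V(L) such that N⁺_D(v) ⊆ V(L) or N⁻_D(v) ⊆ V(L), where N⁺_D(v) and N⁻_D(v) denote the out-neighbourhood and in-neighbourhood of v in D. -/
namespace Stmt16Aux

lemma head?_mem {V : Type*} {p : List V} {a : V} (h : p.head? = some a) : a ∈ p := by
  cases p with
  | nil => simp at h
  | cons b r => simp_all

lemma getLast?_mem {V : Type*} {p : List V} {a : V} (h : p.getLast? = some a) : a ∈ p := by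
  have hne : p ≠ [] := by rintro rfl; simp at h
  rw [List.getLast?_eq_getLast hne, Option.some_inj] at h
  exact h ▸ List.getLast_mem hne

lemma infix_cons {V : Type*} {l p : List V} {a : V} (h : l <:+: p) : l <:+: a :: p := by
  obtain ⟨u, w, rfl⟩ := h
  exact ⟨a :: u, w, by simp⟩

lemma insert_gap {V : Type*} [Fintype V] {A : V → V → Prop}
    {k : ℕ} {s : V} {t : Fin k → V} {L : Fin k → List V}
    (hL : IsSTSystem A s t L)
    (hmax : ∀ P : Fin k → List V, IsSTSystem A s t P →
      (coverSet P).ncard ≤ (coverSet L).ncard)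
    (i : Fin k) (x y : V) (p₁ p₂ : List V) (hdec : L i = p₁ ++ [x, y] ++ p₂)
    (l : List V) (hlne : l ≠ []) (hlnd : l.Nodup)
    (hlout : ∀ z ∈ l, z ∉ coverSet L)
    (hlchain : l.Chain' A)
    (hhead : ∀ a ∈ l.head?, A x a)
    (hlast : ∀ b ∈ l.getLast?, A b y) : False := by
  classical
  set newp : List V := p₁ ++ ([x] ++ l ++ [y]) ++ p₂ with hnewp
  set Q : Fin k → List V := fun j => if j = i then newp else L j with hQ
  have hsubL : ∀ (j : Fin k) v, v ∈ L j → v ∈ coverSet L := fun j v hv => ⟨j, hv⟩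
  have hmemnew : ∀ v, v ∈ newp ↔ v ∈ L i ∨ v ∈ l := by
    intro v; simp [hnewp, hdec]; tauto
  obtain ⟨a0, ha0⟩ : ∃ a, l.head? = some a := by cases l with
    | nil => exact absurd rfl hlne
    | cons c r => exact ⟨c, rfl⟩
  have hdipi := hL.1 i
  rw [hdec] at hdipi
  obtain ⟨-, hnd, hch, hhd, hlst⟩ := hdipi
  -- new path is a dipath
  have hnd' : newp.Nodup := by
    have hperm : newp.Perm (l ++ (p₁ ++ [x, y] ++ p₂)) := by
      rw [List.perm_iff_count]
      intro a
      simp [hnewp, List.count_append, List.count_cons]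
      omega
    refine hperm.symm.nodup ?_
    rw [List.nodup_append]
    refine ⟨hlnd, hnd, ?_⟩
    intro a ha b hamem hab
    subst hab
    exact hlout a ha (hsubL i a (hdec ▸ hamem))
  have hch' : newp.Chain' A := by
    have h1 : List.Chain' A (p₁ ++ ([x, y] ++ p₂)) := by
      rw [← List.append_assoc]; exact hch
    rw [List.Chain', List.isChain_append] at h1
    obtain ⟨hc1, hc2, hc3⟩ := h1
    rw [show ([x, y] ++ p₂ : List V) = x :: (y :: p₂) by simp, List.isChain_cons] at hc2
    obtain ⟨hxy, hc4⟩ := hc2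
    have hnewshape : newp = p₁ ++ (x :: (l ++ (y :: p₂))) := by simp [hnewp]
    rw [hnewshape, List.Chain', List.isChain_append]
    refine ⟨hc1, ?_, ?_⟩
    · rw [List.isChain_cons]
      constructor
      · intro b hb
        rw [List.head?_append, ha0] at hb
        simp at hb
        exact hb ▸ hhead a0 ha0
      · rw [List.isChain_append]
        refine ⟨hlchain, hc4, ?_⟩
        intro b hb c hc
        simp only [List.head?_cons, Option.mem_def, Option.some.injEq] at hc
        subst hc
        exact hlast b hb
    · intro b hb c hc
      simp only [List.head?_cons, Option.mem_def, Option.some.injEq] at hc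
      subst hc
      exact hc3 b hb x (by simp)
  have hhd' : newp.head? = (p₁ ++ [x, y] ++ p₂).head? := by
    cases p₁ <;> simp [hnewp]
  have hlst' : newp.getLast? = (p₁ ++ [x, y] ++ p₂).getLast? := by
    have e1 : newp = (p₁ ++ [x] ++ l) ++ (y :: p₂) := by simp [hnewp]
    have e2 : (p₁ ++ [x, y] ++ p₂ : List V) = (p₁ ++ [x]) ++ (y :: p₂) := by simp
    obtain ⟨b0, hb0⟩ : ∃ b, (y :: p₂).getLast? = some b := by
      exact ⟨(y :: p₂).getLast (by simp), List.getLast?_eq_getLast _⟩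
    have h3 : ∀ (u : List V), (u ++ (y :: p₂)).getLast? = some b0 := by
      intro u; rw [List.getLast?_append, hb0]; rfl
    rw [e1, e2, h3, h3]
  have hQsys : IsSTSystem A s t Q := by
    constructor
    · intro j
      by_cases hj : j = i
      · subst hj
        simp only [hQ, if_pos rfl]
        refine ⟨by simp [hnewp], hnd', hch', ?_, ?_⟩
        · rw [hhd', ← hdec]; exact (hL.1 j).2.2.2.1
        · rw [hlst', ← hdec]; exact (hL.1 j).2.2.2.2
      · simpa only [hQ, if_neg hj] using hL.1 j
    · intro j j' hjj' v hvj hvj'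
      by_cases hj : j = i <;> by_cases hj' : j' = i
      · exact absurd (hj.trans hj'.symm) hjj'
      · subst hj
        simp only [hQ, if_pos rfl, if_neg hj'] at hvj hvj'
        rcases (hmemnew v).1 hvj with h | h
        · exact hL.2 j j' hjj' v h hvj'
        · exact absurd (hsubL j' v hvj') (hlout v h)
      · subst hj'
        simp only [hQ, if_neg hj, if_pos rfl] at hvj hvj'
        rcases (hmemnew v).1 hvj' with h | h
        · exact hL.2 j j' hjj' v hvj h
        · exact absurd (hsubL j v hvj) (hlout v h)
      · simp only [hQ, if_neg hj, if_neg hj'] at hvj hvj'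
        exact hL.2 j j' hjj' v hvj hvj'
  have hss : coverSet L ⊂ coverSet Q := by
    constructor
    · rintro v ⟨j, hvj⟩
      by_cases hj : j = i
      · subst hj
        exact ⟨j, by simp only [hQ, if_pos rfl]; exact (hmemnew v).2 (Or.inl hvj)⟩
      · exact ⟨j, by simp only [hQ, if_neg hj]; exact hvj⟩
    · intro hsub
      have : a0 ∈ coverSet Q := ⟨i, by
        simp only [hQ, if_pos rfl]
        exact (hmemnew a0).2 (Or.inr (head?_mem ha0))⟩
      exact hlout a0 (head?_mem ha0) (hsub this)
  exact absurd (hmax Q hQsys) (not_le.mpr (Set.ncard_lt_ncard hss))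

lemma fwd {V : Type*} (A : V → V → Prop) (z : V) :
    ∀ p : List V, (∀ v ∈ p, A v z ∨ A z v) →
    (∀ x y, [x, y] <:+: p → ¬(A x z ∧ A z y)) →
    ∀ a, p.head? = some a → A a z → ∀ v ∈ p, A v z := by
  intro p
  induction p with
  | nil => intro _ _ a _ _ v hv; simp at hv
  | cons a0 tail ih =>
    intro htot hstep a ha haz v hv
    have ha0a : a0 = a := by simpa using ha
    have ha0z : A a0 z := by rw [ha0a]; exact haz
    rcases List.mem_cons.mp hv with rfl | hv'
    · exact ha0z
    · cases tail with
      | nil => simp at hv'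
      | cons b r =>
        have hinf : ([a0, b] : List V) <:+: a0 :: b :: r := ⟨[], r, rfl⟩
        have hbz : A b z := by
          rcases htot b (by simp) with h | h
          · exact h
          · exact absurd ⟨ha0z, h⟩ (hstep a0 b hinf)
        exact ih (fun w hw => htot w (List.mem_cons_of_mem _ hw))
          (fun x y hxy => hstep x y (infix_cons hxy)) b rfl hbz v hv'

lemma bwd {V : Type*} (A : V → V → Prop) (w : V) (p : List V)
    (htot : ∀ v ∈ p, A w v ∨ A v w)
    (hstep : ∀ x y, [x, y] <:+: p → ¬(A x w ∧ A w y))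
    (b : V) (hb : p.getLast? = some b) (hbw : A w b) : ∀ v ∈ p, A w v := by
  intro v hv
  refine fwd (fun a c => A c a) w p.reverse ?_ ?_ b ?_ hbw v (by simpa using hv)
  · intro v' hv'
    exact htot v' (by simpa using hv')
  · intro x y hxy
    have : ([y, x] : List V) <:+: p := by
      rw [← List.reverse_infix]
      simpa using hxy
    intro ⟨h1, h2⟩
    exact hstep y x this ⟨h2, h1⟩
  · rw [List.head?_reverse]; exact hb

lemma exists_pred {V : Type*} :
    ∀ (p : List V) (a : V), p.head? = some a →
    ∀ v ∈ p, v = a ∨ ∃ x, [x, v] <:+: p := by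
  intro p
  induction p with
  | nil => intro a _ v hv; simp at hv
  | cons a0 tail ih =>
    intro a ha v hv
    have ha0a : a0 = a := by simpa using ha
    rcases List.mem_cons.mp hv with rfl | hv'
    · exact Or.inl ha0a
    · cases tail with
      | nil => simp at hv'
      | cons b r =>
        right
        rcases ih b rfl v hv' with rfl | ⟨x, hx⟩
        · exact ⟨a0, [], r, rfl⟩
        · exact ⟨x, infix_cons hx⟩

end Stmt16Aux

open Stmt16Aux in
theorem stmt_16 {V : Type*} [Fintype V] (A : V → V → Prop)
    (hirr : Irreflexive A) (hsc : Semicomplete A)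
    (k : ℕ) (hk : 2 ≤ k)
    (hcard : (9 * k) ^ 5 ≤ Fintype.card V)
    (hdeg : ∀ v : V, (Fintype.card V + k) / 2 ≤ {w : V | A v w}.ncard ∧
      (Fintype.card V + k) / 2 ≤ {w : V | A w v}.ncard)
    (s : V) (t : Fin k → V) (htinj : Function.Injective t)
    (hst : ∀ i, t i ≠ s)
    (L : Fin k → List V) (hL : IsSTSystem A s t L)
    (hmax : ∀ P : Fin k → List V, IsSTSystem A s t P →
      (coverSet P).ncard ≤ (coverSet L).ncard)
    (hncov : coverSet L ≠ Set.univ) :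
    ∃ v ∈ coverSet L, {w | A v w} ⊆ coverSet L ∨ {w | A w v} ⊆ coverSet L := by
  classical
  by_contra hcon
  push_neg at hcon
  have i₀ : Fin k := ⟨0, by omega⟩
  have i₁ : Fin k := ⟨1, by omega⟩
  have hsC : s ∈ coverSet L := ⟨i₀, head?_mem (hL.1 i₀).2.2.2.1⟩
  have htC : t i₁ ∈ coverSet L := ⟨i₁, getLast?_mem (hL.1 i₁).2.2.2.2⟩
  have step1 : ∀ z, z ∉ coverSet L → ∀ (i : Fin k) (x y : V),
      [x, y] <:+: L i → ¬(A x z ∧ A z y) := by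
    rintro z hz i x y ⟨u, w, huw⟩ ⟨h1, h2⟩
    exact insert_gap hL hmax i x y u w huw.symm [z] (by simp) (by simp)
      (by simpa using hz) (by simp [List.Chain']) (by simpa using h1) (by simpa using h2)
  obtain ⟨z₀, hz₀A, hz₀C⟩ : ∃ z, A s z ∧ z ∉ coverSet L := by
    have h := (hcon s hsC).1
    rw [Set.not_subset] at h
    obtain ⟨z, hz1, hz2⟩ := h
    exact ⟨z, hz1, hz2⟩
  have F1 : ∀ v ∈ coverSet L, A v z₀ := by
    rintro v ⟨i, hvi⟩
    refine fwd A z₀ (L i) ?_ (step1 z₀ hz₀C i) s (hL.1 i).2.2.2.1 hz₀A v hvi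
    intro v' hv'
    exact hsc v' z₀ (fun h => hz₀C (h ▸ ⟨i, hv'⟩))
  have F2 : ∀ v ∈ coverSet L, v ≠ s → ¬ A z₀ v := by
    rintro v ⟨i, hvi⟩ hvs hAzv
    rcases exists_pred (L i) s (hL.1 i).2.2.2.1 v hvi with rfl | ⟨x, hinf⟩
    · exact hvs rfl
    · exact step1 z₀ hz₀C i x v hinf ⟨F1 x ⟨i, hinf.subset (by simp)⟩, hAzv⟩
  have G1 : ∀ w, A w (t i₁) → w ∉ coverSet L → ∀ v ∈ L i₁, A w v := by
    intro w hwt hwC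
    refine bwd A w (L i₁) ?_ (step1 w hwC i₁) (t i₁) (hL.1 i₁).2.2.2.2 hwt
    intro v hv
    rcases hsc w v (fun h => hwC (h ▸ ⟨i₁, hv⟩)) with h | h
    · exact Or.inl h
    · exact Or.inr h
  have F4 : ∀ w, A w (t i₁) → w ∉ coverSet L → ¬ A z₀ w := by
    intro w hwt hwC hzw
    have hne : z₀ ≠ w := by rintro rfl; exact hirr z₀ hzw
    obtain ⟨q, hq⟩ : ∃ q, L i₁ = s :: q := by
      have h := (hL.1 i₁).2.2.2.1
      cases hLi : L i₁ with
      | nil => rw [hLi] at h; simp at h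
      | cons c r =>
        rw [hLi] at h
        simp only [List.head?_cons, Option.some.injEq] at h
        exact ⟨r, by rw [h]⟩
    cases q with
    | nil =>
      have h := (hL.1 i₁).2.2.2.2
      rw [hq] at h
      simp only [List.getLast?_singleton, Option.some.injEq] at h
      exact hst i₁ h.symm
    | cons v₁ r =>
      refine insert_gap hL hmax i₁ s v₁ [] r (by simpa using hq) [z₀, w] (by simp)
        (by simp [hne]) ?_ (by simp [hzw, List.Chain']) (by simpa using hz₀A) ?_
      · intro z hz
        simp only [List.mem_cons, List.mem_singleton, List.not_mem_nil, or_false] at hz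
        rcases hz with rfl | rfl
        exacts [hz₀C, hwC]
      · intro b hb
        simp only [List.getLast?_cons_cons, List.getLast?_singleton, Option.mem_def,
          Option.some.injEq] at hb
        subst hb
        exact G1 w hwt hwC v₁ (by simp [hq])
  -- counting
  set W : Set V := {w | A w (t i₁)} \ coverSet L with hWdef
  have hz₀notW : z₀ ∉ W := fun h => F2 (t i₁) htC (hst i₁) h.1
  have hdisj1 : Disjoint {w | A z₀ w} (((coverSet L \ {s}) ∪ W) ∪ {z₀}) := by
    rw [Set.disjoint_left]
    rintro a ha hmem
    rcases hmem with (hmem | hmem) | hmem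
    · exact F2 a hmem.1 (by simpa using hmem.2) ha
    · exact F4 a hmem.1 hmem.2 ha
    · rw [Set.mem_singleton_iff] at hmem
      subst hmem
      exact hirr a ha
  have hU2 : Disjoint (coverSet L \ {s}) W := by
    rw [Set.disjoint_left]
    rintro a haC haW
    exact haW.2 haC.1
  have hU3 : Disjoint ((coverSet L \ {s}) ∪ W) ({z₀} : Set V) := by
    rw [Set.disjoint_right]
    rintro a ha
    rw [Set.mem_singleton_iff] at ha
    subst ha
    rintro (h | h)
    · exact hz₀C h.1
    · exact hz₀notW h
  have e1 : (((coverSet L \ {s}) ∪ W) ∪ {z₀}).ncard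
      = (coverSet L \ {s}).ncard + W.ncard + 1 := by
    rw [Set.ncard_union_eq hU3, Set.ncard_union_eq hU2, Set.ncard_singleton]
  have etot : ({w | A z₀ w}).ncard + (((coverSet L \ {s}) ∪ W) ∪ {z₀}).ncard
      ≤ Fintype.card V := by
    rw [← Set.ncard_union_eq hdisj1]
    have h := Set.ncard_le_ncard (Set.subset_univ
      ({w | A z₀ w} ∪ (((coverSet L \ {s}) ∪ W) ∪ {z₀}))) Set.finite_univ
    simpa [Set.ncard_univ, Nat.card_eq_fintype_card] using h
  have hCs : (coverSet L \ {s}).ncard + 1 = (coverSet L).ncard :=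
    Set.ncard_diff_singleton_add_one hsC
  have hCt : (coverSet L \ {t i₁}).ncard + 1 = (coverSet L).ncard :=
    Set.ncard_diff_singleton_add_one htC
  have hNin : {w | A w (t i₁)} ⊆ W ∪ (coverSet L \ {t i₁}) := by
    intro w hw
    by_cases hwC : w ∈ coverSet L
    · right
      refine ⟨hwC, ?_⟩
      intro hmem
      rw [Set.mem_singleton_iff] at hmem
      subst hmem
      exact hirr _ hw
    · left
      exact ⟨hw, hwC⟩
  have h2 : (Fintype.card V + k) / 2 ≤ W.ncard + (coverSet L \ {t i₁}).ncard :=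
    le_trans (hdeg (t i₁)).2 (le_trans (Set.ncard_le_ncard hNin (Set.toFinite _))
      (Set.ncard_union_le _ _))
  have h1 : (Fintype.card V + k) / 2 ≤ ({w | A z₀ w}).ncard := (hdeg z₀).1
  omega
end
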